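/- arXiv:1607.00717 — 2 statements merged into one kernel-verified Lean document; each statement's English description precedes it below -/
import Mathlib

section
/- If conformal scaling with β = 1 gives 2e^{2f}μ̃ = 2μ − 2(n−1)Δ_g f − (n−1)(n−2)|∇f|², then for any 0 < β ≤ 1 the energy density μ̄ of (e^{2βf}g, e^{βf}K) satisfies μ̄ = e^{−2βf}((1−β)μ + β e^{2f} μ̃ + β(1−β)(n−1)(n−2)|∇_g f|²/2). In particular, if (1−β)μ + β e^{2f}μ̃ ≥ 0 pointwise then μ̄ ≥ 0 pointwise. -/
open scoped BigOperators
open MeasureTheory Filter Topology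

noncomputable section

abbrev En (n : ℕ) := EuclideanSpace ℝ (Fin n)

variable {n : ℕ}

/-- Partial derivative in the `i`-th coordinate direction. -/
def pd (i : Fin n) (h : En n → ℝ) (x : En n) : ℝ :=
  fderiv ℝ h x (EuclideanSpace.single i 1)

/-- Christoffel symbols of a metric `g` in coordinates. -/
def christoffel (g : En n → Matrix (Fin n) (Fin n) ℝ) (k i j : Fin n) (x : En n) : ℝ :=
  (1/2) * ∑ l, (g x)⁻¹ k l *
    (pd i (fun y => g y j l) x + pd j (fun y => g y i l) x - pd l (fun y => g y i j) x)

/-- Ricci curvature in coordinates. -/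
def ricci (g : En n → Matrix (Fin n) (Fin n) ℝ) (i j : Fin n) (x : En n) : ℝ :=
  (∑ k, pd k (christoffel g k i j) x) - (∑ k, pd j (christoffel g k i k) x)
  + (∑ k, ∑ l, christoffel g k k l x * christoffel g l i j x)
  - (∑ k, ∑ l, christoffel g k j l x * christoffel g l i k x)

/-- Scalar curvature in coordinates. -/
def scalarCurv (g : En n → Matrix (Fin n) (Fin n) ℝ) (x : En n) : ℝ :=
  ∑ i, ∑ j, (g x)⁻¹ i j * ricci g i j x

/-- Squared norm of the gradient of `f` with respect to `g`. -/
def gradSq (g : En n → Matrix (Fin n) (Fin n) ℝ) (f : En n → ℝ) (x : En n) : ℝ :=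
  ∑ i, ∑ j, (g x)⁻¹ i j * pd i f x * pd j f x

/-- Hessian of `f` with respect to `g`. -/
def hess (g : En n → Matrix (Fin n) (Fin n) ℝ) (f : En n → ℝ) (i j : Fin n) (x : En n) : ℝ :=
  pd i (pd j f) x - ∑ k, christoffel g k i j x * pd k f x

/-- Laplace–Beltrami operator of `g` applied to `f` (trace of the Hessian). -/
def laplacian (g : En n → Matrix (Fin n) (Fin n) ℝ) (f : En n → ℝ) (x : En n) : ℝ :=
  ∑ i, ∑ j, (g x)⁻¹ i j * hess g f i j x

/-- Smoothness of a metric (entrywise). -/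
def SmoothMetric (g : En n → Matrix (Fin n) (Fin n) ℝ) : Prop :=
  ∀ i j, ContDiff ℝ (⊤ : ℕ∞) (fun x => g x i j)

/-- `|K|²_g = g^{ik} g^{jl} K_{ij} K_{kl}`. -/
def normSqTensor (g K : En n → Matrix (Fin n) (Fin n) ℝ) (x : En n) : ℝ :=
  ∑ i, ∑ j, ∑ k, ∑ l, (g x)⁻¹ i k * (g x)⁻¹ j l * K x i j * K x k l

/-- `tr_g K = g^{ij} K_{ij}`. -/
def trTensor (g K : En n → Matrix (Fin n) (Fin n) ℝ) (x : En n) : ℝ :=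
  ∑ i, ∑ j, (g x)⁻¹ i j * K x i j

/-- The energy density `μ` of an initial data set: `2μ = S − |K|²_g + (tr_g K)²`. -/
def energyDensity (g K : En n → Matrix (Fin n) (Fin n) ℝ) (x : En n) : ℝ :=
  (1/2) * (scalarCurv g x - normSqTensor g K x + (trTensor g K x)^2)

section MatrixLayer

variable {g : En n → Matrix (Fin n) (Fin n) ℝ}

lemma contDiff_det (hg : ∀ i j, ContDiff ℝ (⊤ : ℕ∞) (fun y => g y i j)) :
    ContDiff ℝ (⊤ : ℕ∞) (fun y => (g y).det) := by
  simp only [Matrix.det_apply']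
  exact ContDiff.sum fun σ _ => contDiff_const.mul (contDiff_prod fun i _ => hg (σ i) i)

lemma contDiff_adjugate (hg : ∀ i j, ContDiff ℝ (⊤ : ℕ∞) (fun y => g y i j)) (i j : Fin n) :
    ContDiff ℝ (⊤ : ℕ∞) (fun y => (g y).adjugate i j) := by
  simp only [Matrix.adjugate_apply]
  apply contDiff_det
  intro k l
  simp only [Matrix.updateRow_apply]
  by_cases h : k = j <;> simp [h, hg, contDiff_const]

lemma contDiff_inv_entry (hg : SmoothMetric g) (hgpos : ∀ x, (g x).PosDef) (i j : Fin n) :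
    ContDiff ℝ (⊤ : ℕ∞) (fun y => (g y)⁻¹ i j) := by
  have h1 : ∀ y, (g y)⁻¹ i j = ((g y).det)⁻¹ * (g y).adjugate i j := by
    intro y
    rw [Matrix.inv_def, Matrix.smul_apply, Ring.inverse_eq_inv', smul_eq_mul]
  simp only [h1]
  exact (((contDiff_det hg).inv fun y => (hgpos y).det_pos.ne').mul (contDiff_adjugate hg i j))

lemma gsymm (hgpos : ∀ x, (g x).PosDef) (y : En n) (i j : Fin n) : g y i j = g y j i := by
  have := (hgpos y).isHermitian
  exact (Matrix.IsHermitian.apply this i j).symm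

lemma Gsymm (hgpos : ∀ x, (g x).PosDef) (y : En n) (i j : Fin n) :
    (g y)⁻¹ i j = (g y)⁻¹ j i := by
  have := (hgpos y).inv.isHermitian
  exact (Matrix.IsHermitian.apply this i j).symm

lemma GG (hgpos : ∀ x, (g x).PosDef) (y : En n) (k l : Fin n) :
    ∑ a, (g y)⁻¹ k a * g y a l = if k = l then 1 else 0 := by
  have h := Matrix.nonsing_inv_mul (g y) (hgpos y).det_pos.ne'.isUnit
  have : ((g y)⁻¹ * g y) k l = (1 : Matrix (Fin n) (Fin n) ℝ) k l := by rw [h]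
  rw [Matrix.mul_apply] at this
  rw [this, Matrix.one_apply]

lemma gG (hgpos : ∀ x, (g x).PosDef) (y : En n) (k l : Fin n) :
    ∑ a, g y k a * (g y)⁻¹ a l = if k = l then 1 else 0 := by
  have h := Matrix.mul_nonsing_inv (g y) (hgpos y).det_pos.ne'.isUnit
  have : (g y * (g y)⁻¹) k l = (1 : Matrix (Fin n) (Fin n) ℝ) k l := by rw [h]
  rw [Matrix.mul_apply] at this
  rw [this, Matrix.one_apply]

lemma traceGG (hgpos : ∀ x, (g x).PosDef) (y : En n) :
    ∑ i, ∑ j, (g y)⁻¹ i j * g y i j = (n : ℝ) := by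
  have : ∀ i, ∑ j, (g y)⁻¹ i j * g y i j = 1 := by
    intro i
    have h2 := GG hgpos y i i
    rw [if_pos rfl] at h2
    rw [← h2]
    exact Finset.sum_congr rfl fun j _ => by rw [gsymm hgpos y i j]
  simp [this]

end MatrixLayer

section PD

lemma pd_congr {i : Fin n} {a b : En n → ℝ} (h : ∀ y, a y = b y) (x : En n) :
    pd i a x = pd i b x := by
  have : a = b := funext h
  rw [pd, pd, this]

lemma pd_const (i : Fin n) (c : ℝ) (x : En n) : pd i (fun _ => c) x = 0 := by
  simp [pd, fderiv_const]

lemma pd_add {i : Fin n} {a b : En n → ℝ} {x : En n}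
    (ha : DifferentiableAt ℝ a x) (hb : DifferentiableAt ℝ b x) :
    pd i (fun y => a y + b y) x = pd i a x + pd i b x := by
  simp [pd, fderiv_fun_add ha hb]

lemma pd_sub {i : Fin n} {a b : En n → ℝ} {x : En n}
    (ha : DifferentiableAt ℝ a x) (hb : DifferentiableAt ℝ b x) :
    pd i (fun y => a y - b y) x = pd i a x - pd i b x := by
  simp [pd, fderiv_fun_sub ha hb]

lemma pd_mul {i : Fin n} {a b : En n → ℝ} {x : En n}
    (ha : DifferentiableAt ℝ a x) (hb : DifferentiableAt ℝ b x) :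
    pd i (fun y => a y * b y) x = pd i a x * b x + a x * pd i b x := by
  simp [pd, fderiv_fun_mul ha hb]; ring

lemma pd_const_mul {i : Fin n} {a : En n → ℝ} {x : En n} (c : ℝ)
    (ha : DifferentiableAt ℝ a x) :
    pd i (fun y => c * a y) x = c * pd i a x := by
  simp [pd, fderiv_const_mul ha]

lemma pd_sum {i : Fin n} {x : En n} {ι : Type*} {s : Finset ι} {a : ι → En n → ℝ}
    (ha : ∀ j, DifferentiableAt ℝ (a j) x) :
    pd i (fun y => ∑ j ∈ s, a j y) x = ∑ j ∈ s, pd i (a j) x := by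
  simp [pd, fderiv_fun_sum (fun j _ => ha j)]

lemma contDiff_pd (i : Fin n) {h : En n → ℝ} (hh : ContDiff ℝ (⊤ : ℕ∞) h) :
    ContDiff ℝ (⊤ : ℕ∞) (pd i h) := by
  have h1 : ContDiff ℝ (⊤ : ℕ∞) (fderiv ℝ h) := hh.fderiv_right (by simp)
  exact h1.clm_apply contDiff_const

lemma pd_exp {i : Fin n} {a : En n → ℝ} {x : En n} (ha : DifferentiableAt ℝ a x) :
    pd i (fun y => Real.exp (a y)) x = Real.exp (a x) * pd i a x := by
  simp [pd, fderiv_exp ha]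

end PD

section PDInv

variable {g : En n → Matrix (Fin n) (Fin n) ℝ}

lemma pd_Ginv (hg : SmoothMetric g) (hgpos : ∀ x, (g x).PosDef) (m k l : Fin n) (x : En n) :
    pd m (fun y => (g y)⁻¹ k l) x
      = -∑ a, ∑ b, (g x)⁻¹ k a * pd m (fun y => g y a b) x * (g x)⁻¹ b l := by
  have dG : ∀ i j, DifferentiableAt ℝ (fun y => (g y)⁻¹ i j) x := fun i j =>
    ((contDiff_inv_entry hg hgpos i j).differentiable (by simp)).differentiableAt
  have dg : ∀ i j, DifferentiableAt ℝ (fun y => g y i j) x := fun i j =>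
    ((hg i j).differentiable (by simp)).differentiableAt
  have H : ∀ c, ∑ a, pd m (fun y => (g y)⁻¹ k a) x * g x a c
      = -∑ a, (g x)⁻¹ k a * pd m (fun y => g y a c) x := by
    intro c
    have h0 : pd m (fun y => ∑ a, (g y)⁻¹ k a * g y a c) x = 0 := by
      rw [pd_congr (fun y => GG hgpos y k c), pd_const]
    rw [pd_sum (fun a => (dG k a).fun_mul (dg a c))] at h0
    have h1 : ∀ a : Fin n, pd m (fun y => (g y)⁻¹ k a * g y a c) x
        = pd m (fun y => (g y)⁻¹ k a) x * g x a c + (g x)⁻¹ k a * pd m (fun y => g y a c) x :=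
      fun a => pd_mul (dG k a) (dg a c)
    rw [Finset.sum_congr rfl (fun a _ => h1 a), Finset.sum_add_distrib] at h0
    linarith [h0]
  calc pd m (fun y => (g y)⁻¹ k l) x
      = ∑ a, pd m (fun y => (g y)⁻¹ k a) x * (if a = l then 1 else 0) := by
        simp [Finset.sum_ite_eq' Finset.univ l (fun a => pd m (fun y => (g y)⁻¹ k a) x)]
    _ = ∑ a, pd m (fun y => (g y)⁻¹ k a) x * (∑ c, g x a c * (g x)⁻¹ c l) := by
        refine Finset.sum_congr rfl fun a _ => ?_
        rw [gG hgpos x a l]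
    _ = ∑ c, (∑ a, pd m (fun y => (g y)⁻¹ k a) x * g x a c) * (g x)⁻¹ c l := by
        simp_rw [Finset.mul_sum, Finset.sum_mul]
        rw [Finset.sum_comm]
        exact Finset.sum_congr rfl fun a _ => Finset.sum_congr rfl fun c _ => by ring
    _ = ∑ c, (-∑ a, (g x)⁻¹ k a * pd m (fun y => g y a c) x) * (g x)⁻¹ c l := by
        exact Finset.sum_congr rfl fun c _ => by rw [H c]
    _ = -∑ a, ∑ b, (g x)⁻¹ k a * pd m (fun y => g y a b) x * (g x)⁻¹ b l := by
        simp only [neg_mul, Finset.sum_mul, Finset.sum_neg_distrib]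
        rw [Finset.sum_comm]

end PDInv

def Vv (g : En n → Matrix (Fin n) (Fin n) ℝ) (φ : En n → ℝ) (k : Fin n) (y : En n) : ℝ :=
  ∑ l, (g y)⁻¹ k l * pd l φ y

def Tt (g : En n → Matrix (Fin n) (Fin n) ℝ) (φ : En n → ℝ) (k i j : Fin n) (y : En n) : ℝ :=
  (if k = j then pd i φ y else 0) + (if k = i then pd j φ y else 0) - g y i j * Vv g φ k y

section Conf

variable {g : En n → Matrix (Fin n) (Fin n) ℝ} {φ : En n → ℝ}

lemma contDiff_christoffel (hg : SmoothMetric g) (hgpos : ∀ x, (g x).PosDef) (k i j : Fin n) :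
    ContDiff ℝ (⊤ : ℕ∞) (christoffel g k i j) := by
  unfold christoffel
  refine contDiff_const.mul (ContDiff.sum fun l _ => (contDiff_inv_entry hg hgpos k l).mul ?_)
  exact ((contDiff_pd i (hg j l)).add (contDiff_pd j (hg i l))).sub (contDiff_pd l (hg i j))

lemma contDiff_Vv (hg : SmoothMetric g) (hgpos : ∀ x, (g x).PosDef) (hφ : ContDiff ℝ (⊤ : ℕ∞) φ)
    (k : Fin n) : ContDiff ℝ (⊤ : ℕ∞) (Vv g φ k) := by
  unfold Vv
  exact ContDiff.sum fun l _ => (contDiff_inv_entry hg hgpos k l).mul (contDiff_pd l hφ)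

lemma contDiff_Tt (hg : SmoothMetric g) (hgpos : ∀ x, (g x).PosDef) (hφ : ContDiff ℝ (⊤ : ℕ∞) φ)
    (k i j : Fin n) : ContDiff ℝ (⊤ : ℕ∞) (Tt g φ k i j) := by
  unfold Tt
  refine ContDiff.sub (ContDiff.add ?_ ?_) ((hg i j).mul (contDiff_Vv hg hgpos hφ k))
  · by_cases h : k = j <;> simp [h, contDiff_pd i hφ, contDiff_const]
  · by_cases h : k = i <;> simp [h, contDiff_pd j hφ, contDiff_const]

lemma christoffel_conf (hg : SmoothMetric g) (hgpos : ∀ x, (g x).PosDef)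
    (hφ : ContDiff ℝ (⊤ : ℕ∞) φ) (k i j : Fin n) (y : En n) :
    christoffel (fun z => Real.exp (2 * φ z) • g z) k i j y
      = christoffel g k i j y + Tt g φ k i j y := by
  have dφ : ∀ z, DifferentiableAt ℝ φ z := fun z => (hφ.differentiable (by simp)).differentiableAt
  have dg : ∀ a b, DifferentiableAt ℝ (fun z => g z a b) y := fun a b =>
    ((hg a b).differentiable (by simp)).differentiableAt
  have due : DifferentiableAt ℝ (fun z => Real.exp (2 * φ z)) y := by
    exact (Real.differentiable_exp.differentiableAt).comp y
      ((differentiable_const 2).differentiableAt.mul (dφ y))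
  set e := Real.exp (2 * φ y) with he
  have hene : e ≠ 0 := Real.exp_ne_zero _
  -- derivative of entries of the scaled metric
  have hent : ∀ (m a b : Fin n), pd m (fun z => (Real.exp (2 * φ z) • g z) a b) y
      = e * (2 * pd m φ y * g y a b + pd m (fun z => g z a b) y) := by
    intro m a b
    have h1 : pd m (fun z => (Real.exp (2 * φ z) • g z) a b) y
        = pd m (fun z => Real.exp (2 * φ z) * g z a b) y :=
      pd_congr (fun z => by simp [Matrix.smul_apply, smul_eq_mul]) y
    rw [h1, pd_mul due (dg a b), pd_exp ((differentiable_const (2:ℝ)).differentiableAt.fun_mul (dφ y)),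
      pd_const_mul 2 (dφ y)]
    ring
  -- inverse of the scaled metric
  have hinv : ∀ a b, ((fun z => Real.exp (2 * φ z) • g z) y)⁻¹ a b = e⁻¹ * (g y)⁻¹ a b := by
    intro a b
    have hIsU : IsUnit (g y).det := (hgpos y).det_pos.ne'.isUnit
    have hmul : (e • g y) * (e⁻¹ • (g y)⁻¹) = 1 := by
      rw [Matrix.smul_mul, Matrix.mul_smul, smul_smul, mul_inv_cancel₀ hene, one_smul,
        Matrix.mul_nonsing_inv _ hIsU]
    have : ((fun z => Real.exp (2 * φ z) • g z) y)⁻¹ = e⁻¹ • (g y)⁻¹ :=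
      Matrix.inv_eq_right_inv hmul
    rw [this]
    simp [Matrix.smul_apply, smul_eq_mul]
  simp only [christoffel]
  have hsummand : ∀ l, ((fun z => Real.exp (2 * φ z) • g z) y)⁻¹ k l *
      (pd i (fun z => (Real.exp (2 * φ z) • g z) j l) y
        + pd j (fun z => (Real.exp (2 * φ z) • g z) i l) y
        - pd l (fun z => (Real.exp (2 * φ z) • g z) i j) y)
      = (g y)⁻¹ k l * (pd i (fun z => g z j l) y + pd j (fun z => g z i l) y
          - pd l (fun z => g z i j) y)
        + 2 * ((g y)⁻¹ k l * (pd i φ y * g y j l) + (g y)⁻¹ k l * (pd j φ y * g y i l)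
          - (g y)⁻¹ k l * (pd l φ y * g y i j)) := by
    intro l
    rw [hinv k l, hent i j l, hent j i l, hent l i j]
    field_simp
    ring
  rw [Finset.sum_congr rfl (fun l _ => hsummand l)]
  rw [Finset.sum_add_distrib, mul_add]
  congr 1
  -- remaining: (1/2) * ∑ 2*(...) = Tt
  have hS1 : ∑ l, (g y)⁻¹ k l * (pd i φ y * g y j l) = (if k = j then pd i φ y else 0) := by
    have h1 : ∀ l, (g y)⁻¹ k l * (pd i φ y * g y j l) = (g y)⁻¹ k l * g y l j * pd i φ y := by
      intro l; rw [gsymm hgpos y j l]; ring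
    rw [Finset.sum_congr rfl fun l _ => h1 l, ← Finset.sum_mul, GG hgpos y k j]
    split <;> simp
  have hS2 : ∑ l, (g y)⁻¹ k l * (pd j φ y * g y i l) = (if k = i then pd j φ y else 0) := by
    have h1 : ∀ l, (g y)⁻¹ k l * (pd j φ y * g y i l) = (g y)⁻¹ k l * g y l i * pd j φ y := by
      intro l; rw [gsymm hgpos y i l]; ring
    rw [Finset.sum_congr rfl fun l _ => h1 l, ← Finset.sum_mul, GG hgpos y k i]
    split <;> simp
  have hS3 : ∑ l, (g y)⁻¹ k l * (pd l φ y * g y i j) = g y i j * Vv g φ k y := by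
    rw [Vv, Finset.mul_sum]
    exact Finset.sum_congr rfl fun l _ => by ring
  simp only [Finset.sum_sub_distrib, Finset.sum_add_distrib, ← Finset.mul_sum, hS1, hS2, hS3, Tt]
  ring

def Mm (g : En n → Matrix (Fin n) (Fin n) ℝ) (l : Fin n) (y : En n) : ℝ :=
  ∑ i, ∑ j, (g y)⁻¹ i j * pd l (fun z => g z i j) y

def Nn (g : En n → Matrix (Fin n) (Fin n) ℝ) (m : Fin n) (y : En n) : ℝ :=
  ∑ i, ∑ j, (g y)⁻¹ i j * pd i (fun z => g z j m) y

def GammaC (g : En n → Matrix (Fin n) (Fin n) ℝ) (l : Fin n) (y : En n) : ℝ :=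
  ∑ k, christoffel g k k l y

def GGamma (g : En n → Matrix (Fin n) (Fin n) ℝ) (l : Fin n) (y : En n) : ℝ :=
  ∑ i, ∑ j, (g y)⁻¹ i j * christoffel g l i j y

def GQform (g : En n → Matrix (Fin n) (Fin n) ℝ) (φ : En n → ℝ) (y : En n) : ℝ :=
  ∑ i, ∑ j, (g y)⁻¹ i j * pd i (pd j φ) y

section Alg

variable {g : En n → Matrix (Fin n) (Fin n) ℝ} {φ : En n → ℝ}

lemma delta_Gg (hgpos : ∀ x, (g x).PosDef) (y : En n) (j k : Fin n) :
    ∑ i, (g y)⁻¹ i j * g y i k = if j = k then 1 else 0 := by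
  have h1 : ∀ i, (g y)⁻¹ i j * g y i k = (g y)⁻¹ j i * g y i k := fun i => by
    rw [Gsymm hgpos y i j]
  rw [Finset.sum_congr rfl fun i _ => h1 i]
  exact GG hgpos y j k

lemma gV (hgpos : ∀ x, (g x).PosDef) (y : En n) (i : Fin n) : ∑ k, g y i k * Vv g φ k y = pd i φ y := by
  calc ∑ k, g y i k * Vv g φ k y
      = ∑ k, ∑ l, g y i k * ((g y)⁻¹ k l * pd l φ y) := by
        simp only [Vv, Finset.mul_sum]
    _ = ∑ l, (∑ k, g y i k * (g y)⁻¹ k l) * pd l φ y := by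
        rw [Finset.sum_comm]
        refine Finset.sum_congr rfl fun l _ => ?_
        rw [Finset.sum_mul]
        exact Finset.sum_congr rfl fun k _ => by ring
    _ = ∑ l, (if i = l then 1 else 0) * pd l φ y := by
        exact Finset.sum_congr rfl fun l _ => by rw [gG hgpos y i l]
    _ = pd i φ y := by simp

lemma Vsym (hgpos : ∀ x, (g x).PosDef) (y : En n) (j : Fin n) : ∑ i, (g y)⁻¹ i j * pd i φ y = Vv g φ j y := by
  unfold Vv
  exact Finset.sum_congr rfl fun i _ => by rw [Gsymm hgpos y i j]

lemma Wprime (y : En n) : ∑ l, pd l φ y * Vv g φ l y = gradSq g φ y := by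
  unfold Vv gradSq
  refine Finset.sum_congr rfl fun l _ => ?_
  rw [Finset.mul_sum]
  exact Finset.sum_congr rfl fun m _ => by ring

lemma christoffel_symm (hgpos : ∀ x, (g x).PosDef) (y : En n) (k i j : Fin n) :
    christoffel g k i j y = christoffel g k j i y := by
  unfold christoffel
  congr 1
  refine Finset.sum_congr rfl fun l _ => ?_
  have h1 : pd l (fun z => g z i j) y = pd l (fun z => g z j i) y :=
    pd_congr (fun z => gsymm hgpos z i j) y
  rw [h1]
  ring

lemma GQsymm (hgpos : ∀ x, (g x).PosDef) (y : En n) : ∑ i, ∑ j, (g y)⁻¹ i j * pd j (pd i φ) y = GQform g φ y := by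
  unfold GQform
  rw [Finset.sum_comm]
  exact Finset.sum_congr rfl fun i _ => Finset.sum_congr rfl fun j _ => by
    rw [Gsymm hgpos y i j]

end Alg

section Alg2

variable {g : En n → Matrix (Fin n) (Fin n) ℝ} {φ : En n → ℝ}

lemma contractGT (hgpos : ∀ x, (g x).PosDef) (y : En n) (l : Fin n) :
    ∑ i, ∑ j, (g y)⁻¹ i j * Tt g φ l i j y = (2 - (n : ℝ)) * Vv g φ l y := by
  unfold Tt
  have expand : ∀ i j : Fin n, (g y)⁻¹ i j *
      ((if l = j then pd i φ y else 0) + (if l = i then pd j φ y else 0)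
        - g y i j * Vv g φ l y)
      = (if l = j then (g y)⁻¹ i j * pd i φ y else 0)
        + (if l = i then (g y)⁻¹ i j * pd j φ y else 0)
        - (g y)⁻¹ i j * g y i j * Vv g φ l y := by
    intro i j; split_ifs <;> ring
  simp only [expand, Finset.sum_sub_distrib, Finset.sum_add_distrib]
  have h1 : ∀ i : Fin n, ∑ j, (if l = j then (g y)⁻¹ i j * pd i φ y else 0)
      = (g y)⁻¹ i l * pd i φ y := by
    intro i; rw [Finset.sum_ite_eq]; simp
  have h2 : ∑ i, ∑ j, (if l = i then (g y)⁻¹ i j * pd j φ y else 0)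
      = Vv g φ l y := by
    have : ∀ i : Fin n, ∑ j, (if l = i then (g y)⁻¹ i j * pd j φ y else 0)
        = (if l = i then ∑ j, (g y)⁻¹ i j * pd j φ y else 0) := by
      intro i; split_ifs <;> simp
    rw [Finset.sum_congr rfl fun i _ => this i, Finset.sum_ite_eq]
    simp [Vv]
  have h3 : ∑ i, ∑ j, (g y)⁻¹ i j * g y i j * Vv g φ l y = (n : ℝ) * Vv g φ l y := by
    rw [← traceGG hgpos y, Finset.sum_mul]
    exact Finset.sum_congr rfl fun i _ => by rw [Finset.sum_mul]
  rw [Finset.sum_congr rfl fun i (_ : i ∈ Finset.univ) => h1 i, h2, h3, Vsym hgpos y l]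
  ring

lemma traceT1 (hgpos : ∀ x, (g x).PosDef) (y : En n) (i : Fin n) :
    ∑ k, Tt g φ k i k y = (n : ℝ) * pd i φ y := by
  unfold Tt
  simp only [Finset.sum_sub_distrib, Finset.sum_add_distrib, if_true, eq_self_iff_true]
  have h1 : ∑ _k : Fin n, pd i φ y = (n : ℝ) * pd i φ y := by
    simp [Finset.card_univ, mul_comm]
  have h2 : ∑ k : Fin n, (if k = i then pd k φ y else 0) = pd i φ y := by
    rw [Finset.sum_ite_eq']; simp
  have h3 : ∑ k, g y i k * Vv g φ k y = pd i φ y := gV hgpos y i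
  rw [h1, h2, h3]; ring

lemma traceT2 (hgpos : ∀ x, (g x).PosDef) (y : En n) (l : Fin n) :
    ∑ k, Tt g φ k k l y = (n : ℝ) * pd l φ y := by
  unfold Tt
  simp only [Finset.sum_sub_distrib, Finset.sum_add_distrib, if_true, eq_self_iff_true]
  have h1 : ∑ k : Fin n, (if k = l then pd k φ y else 0) = pd l φ y := by
    rw [Finset.sum_ite_eq']; simp
  have h2 : ∑ _k : Fin n, pd l φ y = (n : ℝ) * pd l φ y := by
    simp [Finset.card_univ, mul_comm]
  have h3 : ∑ k, g y k l * Vv g φ k y = pd l φ y := by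
    rw [Finset.sum_congr rfl fun k (_ : k ∈ Finset.univ) => by rw [gsymm hgpos y k l]]
    exact gV hgpos y l
  rw [h1, h2, h3]; ring

lemma sumPT (hgpos : ∀ x, (g x).PosDef) (y : En n) (i j : Fin n) :
    ∑ l, pd l φ y * Tt g φ l i j y
      = 2 * pd i φ y * pd j φ y - g y i j * gradSq g φ y := by
  unfold Tt
  have expand : ∀ l : Fin n, pd l φ y *
      ((if l = j then pd i φ y else 0) + (if l = i then pd j φ y else 0)
        - g y i j * Vv g φ l y)
      = (if l = j then pd l φ y * pd i φ y else 0)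
        + (if l = i then pd l φ y * pd j φ y else 0)
        - g y i j * (pd l φ y * Vv g φ l y) := by
    intro l; split_ifs <;> ring
  simp only [expand, Finset.sum_sub_distrib, Finset.sum_add_distrib]
  rw [Finset.sum_ite_eq', Finset.sum_ite_eq', ← Finset.mul_sum, Wprime y]
  simp; ring

lemma sumgT (hgpos : ∀ x, (g x).PosDef) (y : En n) (j i k : Fin n) :
    ∑ l, g y j l * Tt g φ l i k y
      = g y j k * pd i φ y + g y j i * pd k φ y - g y i k * pd j φ y := by
  unfold Tt
  have expand : ∀ l : Fin n, g y j l *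
      ((if l = k then pd i φ y else 0) + (if l = i then pd k φ y else 0)
        - g y i k * Vv g φ l y)
      = (if l = k then g y j l * pd i φ y else 0)
        + (if l = i then g y j l * pd k φ y else 0)
        - g y i k * (g y j l * Vv g φ l y) := by
    intro l; split_ifs <;> ring
  simp only [expand, Finset.sum_sub_distrib, Finset.sum_add_distrib]
  rw [Finset.sum_ite_eq', Finset.sum_ite_eq', ← Finset.mul_sum, gV hgpos y j]
  simp

end Alg2

section Alg3

variable {g : En n → Matrix (Fin n) (Fin n) ℝ} {φ : En n → ℝ}

lemma GammaC_eq (hgpos : ∀ x, (g x).PosDef) (y : En n) (l : Fin n) :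
    GammaC g l y = (1/2) * Mm g l y := by
  unfold GammaC christoffel Mm
  rw [← Finset.mul_sum]
  congr 1
  have hsplit : ∀ k m : Fin n, (g y)⁻¹ k m *
      (pd k (fun z => g z l m) y + pd l (fun z => g z k m) y - pd m (fun z => g z k l) y)
      = (g y)⁻¹ k m * pd k (fun z => g z l m) y + (g y)⁻¹ k m * pd l (fun z => g z k m) y
        - (g y)⁻¹ k m * pd m (fun z => g z k l) y := by
    intro k m; ring
  simp only [hsplit, Finset.sum_add_distrib, Finset.sum_sub_distrib]
  have hS13 : (∑ k, ∑ m, (g y)⁻¹ k m * pd m (fun z => g z k l) y)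
      = ∑ k, ∑ m, (g y)⁻¹ k m * pd k (fun z => g z l m) y := by
    rw [Finset.sum_comm]
    refine Finset.sum_congr rfl fun a _ => Finset.sum_congr rfl fun b _ => ?_
    rw [Gsymm hgpos y b a, pd_congr (fun z => gsymm hgpos z b l) y]
  rw [hS13]
  ring

lemma GGamma_eq (hgpos : ∀ x, (g x).PosDef) (y : En n) (l : Fin n) :
    GGamma g l y = ∑ m, (g y)⁻¹ l m * (Nn g m y - (1/2) * Mm g m y) := by
  unfold GGamma christoffel
  have h1 : ∀ i j : Fin n, (g y)⁻¹ i j * ((1/2) * ∑ m, (g y)⁻¹ l m *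
      (pd i (fun z => g z j m) y + pd j (fun z => g z i m) y - pd m (fun z => g z i j) y))
      = ∑ m, (1/2) * ((g y)⁻¹ l m * ((g y)⁻¹ i j * pd i (fun z => g z j m) y
          + (g y)⁻¹ i j * pd j (fun z => g z i m) y
          - (g y)⁻¹ i j * pd m (fun z => g z i j) y)) := by
    intro i j
    rw [Finset.mul_sum, Finset.mul_sum]
    exact Finset.sum_congr rfl fun m _ => by ring
  simp only [h1]
  have swap1 : ∀ i : Fin n, (∑ j : Fin n, ∑ m : Fin n, (1/2) * ((g y)⁻¹ l m *
      ((g y)⁻¹ i j * pd i (fun z => g z j m) y + (g y)⁻¹ i j * pd j (fun z => g z i m) y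
        - (g y)⁻¹ i j * pd m (fun z => g z i j) y)))
      = ∑ m : Fin n, ∑ j : Fin n, (1/2) * ((g y)⁻¹ l m *
      ((g y)⁻¹ i j * pd i (fun z => g z j m) y + (g y)⁻¹ i j * pd j (fun z => g z i m) y
        - (g y)⁻¹ i j * pd m (fun z => g z i j) y)) := fun i => Finset.sum_comm
  rw [Finset.sum_congr rfl fun i _ => swap1 i, Finset.sum_comm]
  refine Finset.sum_congr rfl fun m _ => ?_
  have hB : (∑ i, ∑ j, (g y)⁻¹ i j * pd j (fun z => g z i m) y) = Nn g m y := by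
    rw [Finset.sum_comm]
    unfold Nn
    refine Finset.sum_congr rfl fun a _ => Finset.sum_congr rfl fun b _ => ?_
    rw [Gsymm hgpos y b a]
  simp only [mul_add, mul_sub, Finset.sum_add_distrib, Finset.sum_sub_distrib,
    ← Finset.mul_sum]
  rw [hB]
  have hA : (∑ i, ∑ j, (g y)⁻¹ i j * pd i (fun z => g z j m) y) = Nn g m y := rfl
  have hC : (∑ i, ∑ j, (g y)⁻¹ i j * pd m (fun z => g z i j) y) = Mm g m y := rfl
  rw [hA, hC]
  ring

end Alg3

section Alg4

variable {g : En n → Matrix (Fin n) (Fin n) ℝ} {φ : En n → ℝ}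

lemma sum3_swap (f : Fin n → Fin n → Fin n → ℝ) :
    ∑ i, ∑ j, ∑ k, f i j k = ∑ k, ∑ i, ∑ j, f i j k := by
  calc ∑ i, ∑ j, ∑ k, f i j k = ∑ i, ∑ k, ∑ j, f i j k :=
        Finset.sum_congr rfl fun i _ => Finset.sum_comm
    _ = ∑ k, ∑ i, ∑ j, f i j k := Finset.sum_comm

lemma innerCT (y : En n) (i : Fin n) (C : Fin n → Fin n → ℝ) :
    ∑ k, ∑ l, C k l * Tt g φ l i k y
      = (∑ k, C k k) * pd i φ y + ∑ k, C k i * pd k φ y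
        - ∑ k, g y i k * (∑ l, C k l * Vv g φ l y) := by
  have hk : ∀ k : Fin n, ∑ l, C k l * Tt g φ l i k y
      = C k k * pd i φ y + C k i * pd k φ y - g y i k * (∑ l, C k l * Vv g φ l y) := by
    intro k
    unfold Tt
    have expand : ∀ l : Fin n, C k l *
        ((if l = k then pd i φ y else 0) + (if l = i then pd k φ y else 0)
          - g y i k * Vv g φ l y)
        = (if l = k then C k l * pd i φ y else 0) + (if l = i then C k l * pd k φ y else 0)
          - g y i k * (C k l * Vv g φ l y) := by
      intro l; split_ifs <;> ring
    simp only [expand, Finset.sum_sub_distrib, Finset.sum_add_distrib]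
    rw [Finset.sum_ite_eq', Finset.sum_ite_eq', ← Finset.mul_sum]
    simp
  rw [Finset.sum_congr rfl fun k (_ : k ∈ Finset.univ) => hk k]
  simp only [Finset.sum_sub_distrib, Finset.sum_add_distrib, Finset.sum_mul]

lemma innerTC (y : En n) (j : Fin n) (C : Fin n → Fin n → ℝ) :
    ∑ k, ∑ l, Tt g φ k j l y * C l k
      = ∑ l, pd j φ y * C l l + ∑ l, pd l φ y * C l j
        - ∑ k, Vv g φ k y * (∑ l, g y j l * C l k) := by
  have hk : ∀ k : Fin n, ∑ l, Tt g φ k j l y * C l k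
      = pd j φ y * C k k + (if k = j then ∑ l, pd l φ y * C l k else 0)
        - Vv g φ k y * (∑ l, g y j l * C l k) := by
    intro k
    unfold Tt
    have expand : ∀ l : Fin n,
        ((if k = l then pd j φ y else 0) + (if k = j then pd l φ y else 0)
          - g y j l * Vv g φ k y) * C l k
        = (if k = l then pd j φ y * C l k else 0) + (if k = j then pd l φ y * C l k else 0)
          - Vv g φ k y * (g y j l * C l k) := by
      intro l; split_ifs <;> ring
    simp only [expand, Finset.sum_sub_distrib, Finset.sum_add_distrib]
    rw [Finset.sum_ite_eq, ← Finset.mul_sum]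
    have : ∑ l : Fin n, (if k = j then pd l φ y * C l k else 0)
        = (if k = j then ∑ l, pd l φ y * C l k else 0) := by
      split_ifs <;> simp
    rw [this]
    simp
  rw [Finset.sum_congr rfl fun k (_ : k ∈ Finset.univ) => hk k]
  simp only [Finset.sum_sub_distrib, Finset.sum_add_distrib]
  rw [Finset.sum_ite_eq', ← Finset.mul_sum]
  simp [Finset.mul_sum]

end Alg4

section Alg5

variable {g : En n → Matrix (Fin n) (Fin n) ℝ} {φ : En n → ℝ}

lemma hS2gen (y : En n) (A : Fin n → Fin n → Fin n → ℝ) (B : Fin n → ℝ) :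
    ∑ i, ∑ j, (g y)⁻¹ i j * ∑ k, A k i j * B k
      = ∑ k, (∑ i, ∑ j, (g y)⁻¹ i j * A k i j) * B k := by
  calc ∑ i, ∑ j, (g y)⁻¹ i j * ∑ k, A k i j * B k
      = ∑ i, ∑ j, ∑ k, (g y)⁻¹ i j * A k i j * B k := by
        refine Finset.sum_congr rfl fun i _ => Finset.sum_congr rfl fun j _ => ?_
        rw [Finset.mul_sum]
        exact Finset.sum_congr rfl fun k _ => by ring
    _ = ∑ k, ∑ i, ∑ j, (g y)⁻¹ i j * A k i j * B k := sum3_swap _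
    _ = ∑ k, (∑ i, ∑ j, (g y)⁻¹ i j * A k i j) * B k := by
        refine Finset.sum_congr rfl fun k _ => ?_
        rw [Finset.sum_mul]
        exact Finset.sum_congr rfl fun i _ => by rw [Finset.sum_mul]

lemma contract6 (hgpos : ∀ x, (g x).PosDef) (y : En n) :
    ∑ i, ∑ j, (g y)⁻¹ i j * (∑ k, ∑ l, christoffel g k j l y * Tt g φ l i k y)
      = ∑ k, GGamma g k y * pd k φ y := by
  have hin : ∀ i j : Fin n, ∑ k, ∑ l, christoffel g k j l y * Tt g φ l i k y
      = GammaC g j y * pd i φ y + ∑ k, christoffel g k i j y * pd k φ y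
        - ∑ k, g y i k * (∑ l, christoffel g k j l y * Vv g φ l y) := by
    intro i j
    rw [innerCT y i (fun k l => christoffel g k j l y)]
    have e1 : (∑ k, christoffel g k j k y) = GammaC g j y := by
      unfold GammaC
      exact Finset.sum_congr rfl fun k _ => christoffel_symm hgpos y k j k
    have e2 : (∑ k, christoffel g k j i y * pd k φ y)
        = ∑ k, christoffel g k i j y * pd k φ y :=
      Finset.sum_congr rfl fun k _ => by rw [christoffel_symm hgpos y k j i]
    rw [e1, e2]
  rw [Finset.sum_congr rfl fun i (_ : i ∈ Finset.univ) =>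
    Finset.sum_congr rfl fun j (_ : j ∈ Finset.univ) => by rw [hin i j]]
  simp only [mul_add, mul_sub, Finset.sum_add_distrib, Finset.sum_sub_distrib]
  have hS1 : ∑ i, ∑ j, (g y)⁻¹ i j * (GammaC g j y * pd i φ y)
      = ∑ l, GammaC g l y * Vv g φ l y := by
    rw [Finset.sum_comm]
    refine Finset.sum_congr rfl fun j _ => ?_
    rw [← Vsym hgpos y j, Finset.mul_sum]
    exact Finset.sum_congr rfl fun i _ => by ring
  have hS2 : ∑ i, ∑ j, (g y)⁻¹ i j * ∑ k, christoffel g k i j y * pd k φ y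
      = ∑ k, GGamma g k y * pd k φ y := by
    rw [hS2gen y (fun k i j => christoffel g k i j y) (fun k => pd k φ y)]
    rfl
  have hS3 : ∑ i, ∑ j, (g y)⁻¹ i j * ∑ k, g y i k * (∑ l, christoffel g k j l y * Vv g φ l y)
      = ∑ l, GammaC g l y * Vv g φ l y := by
    calc ∑ i, ∑ j, (g y)⁻¹ i j * ∑ k, g y i k * (∑ l, christoffel g k j l y * Vv g φ l y)
        = ∑ i, ∑ j, ∑ k, (g y)⁻¹ i j * g y i k * (∑ l, christoffel g k j l y * Vv g φ l y) := by
          refine Finset.sum_congr rfl fun i _ => Finset.sum_congr rfl fun j _ => ?_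
          rw [Finset.mul_sum]
          exact Finset.sum_congr rfl fun k _ => by ring
      _ = ∑ k, ∑ i, ∑ j, (g y)⁻¹ i j * g y i k * (∑ l, christoffel g k j l y * Vv g φ l y) :=
          sum3_swap _
      _ = ∑ k, ∑ j, (∑ i, (g y)⁻¹ i j * g y i k) * (∑ l, christoffel g k j l y * Vv g φ l y) := by
          refine Finset.sum_congr rfl fun k _ => ?_
          rw [Finset.sum_comm]
          refine Finset.sum_congr rfl fun j _ => ?_
          rw [Finset.sum_mul]
      _ = ∑ k, ∑ j, (if j = k then (1:ℝ) else 0) * (∑ l, christoffel g k j l y * Vv g φ l y) := by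
          refine Finset.sum_congr rfl fun k _ => Finset.sum_congr rfl fun j _ => ?_
          rw [delta_Gg hgpos y j k]
      _ = ∑ k, ∑ l, christoffel g k k l y * Vv g φ l y := by
          refine Finset.sum_congr rfl fun k _ => ?_
          rw [Finset.sum_congr rfl fun j (_ : j ∈ Finset.univ) => (by split_ifs <;> simp :
            (if j = k then (1:ℝ) else 0) * (∑ l, christoffel g k j l y * Vv g φ l y)
              = (if j = k then (∑ l, christoffel g k j l y * Vv g φ l y) else 0))]
          rw [Finset.sum_ite_eq']
          simp
      _ = ∑ l, GammaC g l y * Vv g φ l y := by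
          rw [Finset.sum_comm]
          refine Finset.sum_congr rfl fun l _ => ?_
          rw [GammaC, Finset.sum_mul]
  rw [hS1, hS2, hS3]
  ring

lemma contract7 (hgpos : ∀ x, (g x).PosDef) (y : En n) :
    ∑ i, ∑ j, (g y)⁻¹ i j * (∑ k, ∑ l, Tt g φ k j l y * christoffel g l i k y)
      = ∑ k, GGamma g k y * pd k φ y := by
  have hin : ∀ i j : Fin n, ∑ k, ∑ l, Tt g φ k j l y * christoffel g l i k y
      = pd j φ y * GammaC g i y + ∑ l, pd l φ y * christoffel g l i j y
        - ∑ k, Vv g φ k y * (∑ l, g y j l * christoffel g l i k y) := by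
    intro i j
    rw [innerTC y j (fun l k => christoffel g l i k y)]
    have e1 : (∑ l, pd j φ y * christoffel g l i l y) = pd j φ y * GammaC g i y := by
      rw [GammaC, Finset.mul_sum]
      exact Finset.sum_congr rfl fun l _ => by rw [christoffel_symm hgpos y l i l]
    rw [e1]
  rw [Finset.sum_congr rfl fun i (_ : i ∈ Finset.univ) =>
    Finset.sum_congr rfl fun j (_ : j ∈ Finset.univ) => by rw [hin i j]]
  simp only [mul_add, mul_sub, Finset.sum_add_distrib, Finset.sum_sub_distrib]
  have hS1 : ∑ i, ∑ j, (g y)⁻¹ i j * (pd j φ y * GammaC g i y)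
      = ∑ l, GammaC g l y * Vv g φ l y := by
    refine Finset.sum_congr rfl fun i _ => ?_
    rw [Vv, Finset.mul_sum]
    exact Finset.sum_congr rfl fun j _ => by ring
  have hS2 : ∑ i, ∑ j, (g y)⁻¹ i j * ∑ l, pd l φ y * christoffel g l i j y
      = ∑ k, GGamma g k y * pd k φ y := by
    have e : ∀ i j : Fin n, (∑ l, pd l φ y * christoffel g l i j y)
        = ∑ l, christoffel g l i j y * pd l φ y :=
      fun i j => Finset.sum_congr rfl fun l _ => by ring
    rw [Finset.sum_congr rfl fun i (_ : i ∈ Finset.univ) =>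
      Finset.sum_congr rfl fun j (_ : j ∈ Finset.univ) => by rw [e i j]]
    rw [hS2gen y (fun k i j => christoffel g k i j y) (fun k => pd k φ y)]
    rfl
  have hS3 : ∑ i, ∑ j, (g y)⁻¹ i j * ∑ k, Vv g φ k y * (∑ l, g y j l * christoffel g l i k y)
      = ∑ l, GammaC g l y * Vv g φ l y := by
    calc ∑ i, ∑ j, (g y)⁻¹ i j * ∑ k, Vv g φ k y * (∑ l, g y j l * christoffel g l i k y)
        = ∑ i, ∑ j, ∑ k, (g y)⁻¹ i j * (Vv g φ k y * (∑ l, g y j l * christoffel g l i k y)) := by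
          refine Finset.sum_congr rfl fun i _ => Finset.sum_congr rfl fun j _ => ?_
          rw [Finset.mul_sum]
      _ = ∑ k, ∑ i, ∑ j, (g y)⁻¹ i j * (Vv g φ k y * (∑ l, g y j l * christoffel g l i k y)) :=
          sum3_swap _
      _ = ∑ k, Vv g φ k y * GammaC g k y := by
          refine Finset.sum_congr rfl fun k _ => ?_
          have hi : ∀ i : Fin n, ∑ j, (g y)⁻¹ i j * (Vv g φ k y * (∑ l, g y j l * christoffel g l i k y))
              = Vv g φ k y * christoffel g i i k y := by
            intro i
            calc ∑ j, (g y)⁻¹ i j * (Vv g φ k y * (∑ l, g y j l * christoffel g l i k y))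
                = ∑ j, ∑ l, Vv g φ k y * ((g y)⁻¹ i j * g y j l * christoffel g l i k y) := by
                  refine Finset.sum_congr rfl fun j _ => ?_
                  rw [Finset.mul_sum, Finset.mul_sum]
                  exact Finset.sum_congr rfl fun l _ => by ring
              _ = ∑ l, ∑ j, Vv g φ k y * ((g y)⁻¹ i j * g y j l * christoffel g l i k y) :=
                  Finset.sum_comm
              _ = ∑ l, Vv g φ k y * ((∑ j, (g y)⁻¹ i j * g y j l) * christoffel g l i k y) := by
                  refine Finset.sum_congr rfl fun l _ => ?_
                  rw [Finset.sum_mul, Finset.mul_sum]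
              _ = ∑ l, Vv g φ k y * ((if i = l then (1:ℝ) else 0) * christoffel g l i k y) := by
                  refine Finset.sum_congr rfl fun l _ => ?_
                  rw [GG hgpos y i l]
              _ = Vv g φ k y * christoffel g i i k y := by
                  rw [Finset.sum_congr rfl fun l (_ : l ∈ Finset.univ) => (by split_ifs <;> simp :
                    Vv g φ k y * ((if i = l then (1:ℝ) else 0) * christoffel g l i k y)
                      = (if i = l then Vv g φ k y * christoffel g l i k y else 0))]
                  rw [Finset.sum_ite_eq]
                  simp
          rw [Finset.sum_congr rfl fun i (_ : i ∈ Finset.univ) => hi i, ← Finset.mul_sum]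
          rfl
      _ = ∑ l, GammaC g l y * Vv g φ l y := Finset.sum_congr rfl fun l _ => by ring
  rw [hS1, hS2, hS3]
  ring

lemma contract8 (hgpos : ∀ x, (g x).PosDef) (y : En n) :
    ∑ i, ∑ j, (g y)⁻¹ i j * (∑ k, ∑ l, Tt g φ k j l y * Tt g φ l i k y)
      = (2 - (n : ℝ)) * gradSq g φ y := by
  have hin : ∀ i j : Fin n, ∑ k, ∑ l, Tt g φ k j l y * Tt g φ l i k y
      = ((n : ℝ) + 2) * (pd i φ y * pd j φ y) - 2 * (g y i j * gradSq g φ y) := by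
    intro i j
    rw [innerTC y j (fun l k => Tt g φ l i k y)]
    have e1 : (∑ l, pd j φ y * Tt g φ l i l y) = pd j φ y * ((n : ℝ) * pd i φ y) := by
      rw [← Finset.mul_sum, traceT1 hgpos y i]
    have e2 : (∑ l, pd l φ y * Tt g φ l i j y)
        = 2 * pd i φ y * pd j φ y - g y i j * gradSq g φ y := sumPT hgpos y i j
    have e3 : (∑ k, Vv g φ k y * (∑ l, g y j l * Tt g φ l i k y))
        = pd i φ y * pd j φ y + g y i j * gradSq g φ y - pd i φ y * pd j φ y := by
      have hgt : ∀ k : Fin n, Vv g φ k y * (∑ l, g y j l * Tt g φ l i k y)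
          = pd i φ y * (g y j k * Vv g φ k y) + g y j i * (pd k φ y * Vv g φ k y)
            - pd j φ y * (g y i k * Vv g φ k y) := by
        intro k
        rw [sumgT hgpos y j i k]
        ring
      rw [Finset.sum_congr rfl fun k (_ : k ∈ Finset.univ) => hgt k]
      simp only [Finset.sum_sub_distrib, Finset.sum_add_distrib, ← Finset.mul_sum]
      have m1 : ∑ k, g y j k * Vv g φ k y = pd j φ y := gV hgpos y j
      have m2 : ∑ k, pd k φ y * Vv g φ k y = gradSq g φ y := Wprime y
      have m3 : ∑ k, g y i k * Vv g φ k y = pd i φ y := gV hgpos y i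
      rw [m1, m2, m3, gsymm hgpos y j i]
      ring
    rw [e1, e2, e3]
    push_cast
    ring
  rw [Finset.sum_congr rfl fun i (_ : i ∈ Finset.univ) =>
    Finset.sum_congr rfl fun j (_ : j ∈ Finset.univ) => by rw [hin i j]]
  simp only [mul_sub, Finset.sum_sub_distrib]
  have h1 : ∑ i, ∑ j, (g y)⁻¹ i j * (((n : ℝ) + 2) * (pd i φ y * pd j φ y))
      = ((n : ℝ) + 2) * gradSq g φ y := by
    rw [gradSq, Finset.mul_sum]
    refine Finset.sum_congr rfl fun i _ => ?_
    rw [Finset.mul_sum]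
    exact Finset.sum_congr rfl fun j _ => by ring
  have h2 : ∑ i, ∑ j, (g y)⁻¹ i j * (2 * (g y i j * gradSq g φ y))
      = 2 * (n : ℝ) * gradSq g φ y := by
    have : ∀ i j : Fin n, (g y)⁻¹ i j * (2 * (g y i j * gradSq g φ y))
        = ((g y)⁻¹ i j * g y i j) * (2 * gradSq g φ y) := fun i j => by ring
    rw [Finset.sum_congr rfl fun i (_ : i ∈ Finset.univ) =>
      Finset.sum_congr rfl fun j (_ : j ∈ Finset.univ) => by rw [this i j]]
    have := traceGG hgpos y
    calc ∑ i, ∑ j, ((g y)⁻¹ i j * g y i j) * (2 * gradSq g φ y)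
        = (∑ i, ∑ j, (g y)⁻¹ i j * g y i j) * (2 * gradSq g φ y) := by
          rw [Finset.sum_mul]
          exact Finset.sum_congr rfl fun i _ => by rw [Finset.sum_mul]
      _ = 2 * (n : ℝ) * gradSq g φ y := by rw [this]; ring
  rw [h1, h2]
  ring

section Alg6

variable {g : En n → Matrix (Fin n) (Fin n) ℝ} {φ : En n → ℝ}

lemma pd_Vv (hg : SmoothMetric g) (hgpos : ∀ x, (g x).PosDef) (hφ : ContDiff ℝ (⊤ : ℕ∞) φ)
    (m k : Fin n) (x : En n) :
    pd m (Vv g φ k) x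
      = -∑ a, ∑ b, (g x)⁻¹ k a * pd m (fun z => g z a b) x * Vv g φ b x
        + ∑ l, (g x)⁻¹ k l * pd m (pd l φ) x := by
  have dG : ∀ i j, DifferentiableAt ℝ (fun y => (g y)⁻¹ i j) x := fun i j =>
    ((contDiff_inv_entry hg hgpos i j).differentiable (by simp)).differentiableAt
  have dP : ∀ l : Fin n, DifferentiableAt ℝ (pd l φ) x := fun l =>
    ((contDiff_pd l hφ).differentiable (by simp)).differentiableAt
  have h0 : pd m (Vv g φ k) x
      = ∑ l, (pd m (fun y => (g y)⁻¹ k l) x * pd l φ x + (g x)⁻¹ k l * pd m (pd l φ) x) := by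
    rw [show Vv g φ k = fun y => ∑ l, (g y)⁻¹ k l * pd l φ y from rfl]
    rw [pd_sum (fun l => (dG k l).fun_mul (dP l))]
    exact Finset.sum_congr rfl fun l _ => pd_mul (dG k l) (dP l)
  rw [h0, Finset.sum_add_distrib]
  congr 1
  calc ∑ l, pd m (fun y => (g y)⁻¹ k l) x * pd l φ x
      = ∑ l, (-∑ a, ∑ b, (g x)⁻¹ k a * pd m (fun z => g z a b) x * (g x)⁻¹ b l) * pd l φ x := by
        exact Finset.sum_congr rfl fun l _ => by rw [pd_Ginv hg hgpos m k l x]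
    _ = -∑ l, ∑ a, ∑ b, (g x)⁻¹ k a * pd m (fun z => g z a b) x * ((g x)⁻¹ b l * pd l φ x) := by
        simp only [neg_mul, Finset.sum_mul, Finset.sum_neg_distrib]
        refine congrArg Neg.neg ?_
        refine Finset.sum_congr rfl fun l _ => Finset.sum_congr rfl fun a _ =>
          Finset.sum_congr rfl fun b _ => by ring
    _ = -∑ a, ∑ b, ∑ l, (g x)⁻¹ k a * pd m (fun z => g z a b) x * ((g x)⁻¹ b l * pd l φ x) := by
        refine congrArg Neg.neg ?_
        exact (sum3_swap (fun a b l => (g x)⁻¹ k a * pd m (fun z => g z a b) x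
          * ((g x)⁻¹ b l * pd l φ x))).symm
    _ = -∑ a, ∑ b, (g x)⁻¹ k a * pd m (fun z => g z a b) x * Vv g φ b x := by
        refine congrArg Neg.neg ?_
        refine Finset.sum_congr rfl fun a _ => Finset.sum_congr rfl fun b _ => ?_
        rw [Vv, Finset.mul_sum]

lemma pd_Tt (hg : SmoothMetric g) (hgpos : ∀ x, (g x).PosDef) (hφ : ContDiff ℝ (⊤ : ℕ∞) φ)
    (m k i j : Fin n) (x : En n) :
    pd m (Tt g φ k i j) x
      = (if k = j then pd m (pd i φ) x else 0) + (if k = i then pd m (pd j φ) x else 0)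
        - (pd m (fun z => g z i j) x * Vv g φ k x + g x i j * pd m (Vv g φ k) x) := by
  have dg : ∀ a b, DifferentiableAt ℝ (fun z => g z a b) x := fun a b =>
    ((hg a b).differentiable (by simp)).differentiableAt
  have dV : DifferentiableAt ℝ (Vv g φ k) x :=
    ((contDiff_Vv hg hgpos hφ k).differentiable (by simp)).differentiableAt
  have d1 : DifferentiableAt ℝ (fun y => if k = j then pd i φ y else 0) x := by
    by_cases h : k = j <;> simp only [h, if_true, if_false]
    · exact ((contDiff_pd i hφ).differentiable (by simp)).differentiableAt
    · exact differentiableAt_const 0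
  have d2 : DifferentiableAt ℝ (fun y => if k = i then pd j φ y else 0) x := by
    by_cases h : k = i <;> simp only [h, if_true, if_false]
    · exact ((contDiff_pd j hφ).differentiable (by simp)).differentiableAt
    · exact differentiableAt_const 0
  have d3 : DifferentiableAt ℝ (fun y => g y i j * Vv g φ k y) x := (dg i j).mul dV
  have e0 : pd m (Tt g φ k i j) x
      = pd m (fun y => (if k = j then pd i φ y else 0) + (if k = i then pd j φ y else 0)) x
        - pd m (fun y => g y i j * Vv g φ k y) x := by
    rw [show Tt g φ k i j = fun y => ((if k = j then pd i φ y else 0)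
      + (if k = i then pd j φ y else 0)) - g y i j * Vv g φ k y from rfl]
    exact pd_sub (d1.add d2) d3
  rw [e0, pd_add d1 d2, pd_mul (dg i j) dV]
  have e1 : pd m (fun y => if k = j then pd i φ y else 0) x
      = (if k = j then pd m (pd i φ) x else 0) := by
    by_cases h : k = j
    · simp only [h, if_true]
    · simp only [h, if_false, pd_const]
  have e2 : pd m (fun y => if k = i then pd j φ y else 0) x
      = (if k = i then pd m (pd j φ) x else 0) := by
    by_cases h : k = i
    · simp only [h, if_true]
    · simp only [h, if_false, pd_const]
  rw [e1, e2]

lemma sum_pd_Tt (hg : SmoothMetric g) (hgpos : ∀ x, (g x).PosDef) (hφ : ContDiff ℝ (⊤ : ℕ∞) φ)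
    (i j : Fin n) (x : En n) :
    ∑ k, pd k (Tt g φ k i j) x
      = pd j (pd i φ) x + pd i (pd j φ) x
        - (∑ k, pd k (fun z => g z i j) x * Vv g φ k x + g x i j * ∑ k, pd k (Vv g φ k) x) := by
  rw [Finset.sum_congr rfl fun k (_ : k ∈ Finset.univ) => pd_Tt hg hgpos hφ k k i j x]
  simp only [Finset.sum_sub_distrib, Finset.sum_add_distrib]
  rw [Finset.sum_ite_eq', Finset.sum_ite_eq', ← Finset.mul_sum]
  simp

lemma pd_TtTrace (hg : SmoothMetric g) (hgpos : ∀ x, (g x).PosDef) (hφ : ContDiff ℝ (⊤ : ℕ∞) φ)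
    (i j : Fin n) (x : En n) :
    ∑ k, pd j (Tt g φ k i k) x = (n : ℝ) * pd j (pd i φ) x := by
  have dT : ∀ k : Fin n, DifferentiableAt ℝ (Tt g φ k i k) x := fun k =>
    ((contDiff_Tt hg hgpos hφ k i k).differentiable (by simp)).differentiableAt
  calc ∑ k, pd j (Tt g φ k i k) x
      = pd j (fun y => ∑ k, Tt g φ k i k y) x := (pd_sum dT).symm
    _ = pd j (fun y => (n : ℝ) * pd i φ y) x := pd_congr (fun y => traceT1 hgpos y i) x
    _ = (n : ℝ) * pd j (pd i φ) x :=
        pd_const_mul _ (((contDiff_pd i hφ).differentiable (by simp)).differentiableAt)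

lemma sum_pd_Vv (hg : SmoothMetric g) (hgpos : ∀ x, (g x).PosDef) (hφ : ContDiff ℝ (⊤ : ℕ∞) φ)
    (x : En n) :
    ∑ k, pd k (Vv g φ k) x
      = -∑ b, Nn g b x * Vv g φ b x + GQform g φ x := by
  rw [Finset.sum_congr rfl fun k (_ : k ∈ Finset.univ) => pd_Vv hg hgpos hφ k k x]
  rw [Finset.sum_add_distrib]
  congr 1
  · rw [Finset.sum_neg_distrib]
    refine congrArg Neg.neg ?_
    rw [sum3_swap (fun k a b => (g x)⁻¹ k a * pd k (fun z => g z a b) x * Vv g φ b x)]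
    refine Finset.sum_congr rfl fun b _ => ?_
    rw [show Nn g b x * Vv g φ b x
      = ∑ i, ∑ j, (g x)⁻¹ i j * pd i (fun z => g z j b) x * Vv g φ b x from by
        rw [Nn, Finset.sum_mul]
        exact Finset.sum_congr rfl fun i _ => by rw [Finset.sum_mul]]

end Alg6

section Alg7

variable {g : En n → Matrix (Fin n) (Fin n) ℝ} {φ : En n → ℝ}

lemma sum_factor (F : Fin n → Fin n → ℝ) (B : Fin n → ℝ) :
    ∑ k, ∑ l, F k l * B l = ∑ l, (∑ k, F k l) * B l := by
  rw [Finset.sum_comm]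
  exact Finset.sum_congr rfl fun l _ => (Finset.sum_mul _ _ _).symm

lemma laplacian_eq (hgpos : ∀ x, (g x).PosDef) (x : En n) :
    laplacian g φ x = GQform g φ x - ∑ k, GGamma g k x * pd k φ x := by
  unfold laplacian hess
  simp only [mul_sub, Finset.sum_sub_distrib]
  congr 1
  rw [hS2gen x (fun k i j => christoffel g k i j x) (fun k => pd k φ x)]
  rfl

lemma GGammaP (hgpos : ∀ x, (g x).PosDef) (y : En n) :
    ∑ k, GGamma g k y * pd k φ y
      = ∑ b, (Nn g b y - (1/2) * Mm g b y) * Vv g φ b y := by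
  rw [Finset.sum_congr rfl fun k (_ : k ∈ Finset.univ) => by rw [GGamma_eq hgpos y k]]
  rw [Finset.sum_congr rfl fun k (_ : k ∈ Finset.univ) => Finset.sum_mul _ _ _]
  rw [Finset.sum_comm]
  refine Finset.sum_congr rfl fun m _ => ?_
  rw [← Vsym hgpos y m, Finset.mul_sum]
  exact Finset.sum_congr rfl fun k _ => by ring

lemma GammaCV (hgpos : ∀ x, (g x).PosDef) (y : En n) :
    ∑ l, GammaC g l y * Vv g φ l y = (1/2) * ∑ l, Mm g l y * Vv g φ l y := by
  rw [Finset.mul_sum]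
  exact Finset.sum_congr rfl fun l _ => by rw [GammaC_eq hgpos y l]; ring

lemma ricci_conf (hg : SmoothMetric g) (hgpos : ∀ x, (g x).PosDef)
    (hφ : ContDiff ℝ (⊤ : ℕ∞) φ) (i j : Fin n) (x : En n) :
    ricci (fun y => Real.exp (2 * φ y) • g y) i j x
      = ricci g i j x
        + ((∑ k, pd k (Tt g φ k i j) x) - (∑ k, pd j (Tt g φ k i k) x)
          + (∑ l, (GammaC g l x * Tt g φ l i j x
              + (n : ℝ) * pd l φ x * christoffel g l i j x
              + (n : ℝ) * pd l φ x * Tt g φ l i j x))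
          - ((∑ k, ∑ l, christoffel g k j l x * Tt g φ l i k x)
            + (∑ k, ∑ l, Tt g φ k j l x * christoffel g l i k x)
            + (∑ k, ∑ l, Tt g φ k j l x * Tt g φ l i k x))) := by
  have hconf := christoffel_conf (g := g) (φ := φ) hg hgpos hφ
  have dΓ : ∀ k a b, DifferentiableAt ℝ (christoffel g k a b) x := fun k a b =>
    ((contDiff_christoffel hg hgpos k a b).differentiable (by simp)).differentiableAt
  have dT : ∀ k a b, DifferentiableAt ℝ (Tt g φ k a b) x := fun k a b =>
    ((contDiff_Tt hg hgpos hφ k a b).differentiable (by simp)).differentiableAt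
  unfold ricci
  have t1 : ∀ k : Fin n, pd k (christoffel (fun y => Real.exp (2 * φ y) • g y) k i j) x
      = pd k (christoffel g k i j) x + pd k (Tt g φ k i j) x := fun k => by
    rw [pd_congr (fun y => hconf k i j y) x]
    exact pd_add (dΓ k i j) (dT k i j)
  have t2 : ∀ k : Fin n, pd j (christoffel (fun y => Real.exp (2 * φ y) • g y) k i k) x
      = pd j (christoffel g k i k) x + pd j (Tt g φ k i k) x := fun k => by
    rw [pd_congr (fun y => hconf k i k y) x]
    exact pd_add (dΓ k i k) (dT k i k)
  have t3 : ∑ k, ∑ l, christoffel (fun y => Real.exp (2 * φ y) • g y) k k l x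
        * christoffel (fun y => Real.exp (2 * φ y) • g y) l i j x
      = ∑ k, ∑ l, christoffel g k k l x * christoffel g l i j x
        + ∑ l, (GammaC g l x * Tt g φ l i j x
            + (n : ℝ) * pd l φ x * christoffel g l i j x
            + (n : ℝ) * pd l φ x * Tt g φ l i j x) := by
    rw [sum_factor (fun k l => christoffel (fun y => Real.exp (2 * φ y) • g y) k k l x)
      (fun l => christoffel (fun y => Real.exp (2 * φ y) • g y) l i j x)]
    rw [sum_factor (fun k l => christoffel g k k l x) (fun l => christoffel g l i j x)]
    rw [← Finset.sum_add_distrib]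
    refine Finset.sum_congr rfl fun l _ => ?_
    have e1 : (∑ k, christoffel (fun y => Real.exp (2 * φ y) • g y) k k l x)
        = GammaC g l x + (n : ℝ) * pd l φ x := by
      rw [Finset.sum_congr rfl fun k (_ : k ∈ Finset.univ) => hconf k k l x,
        Finset.sum_add_distrib, traceT2 hgpos x l]
      rfl
    rw [e1, hconf l i j x]
    rw [show (∑ k, christoffel g k k l x) = GammaC g l x from rfl]
    ring
  have t4 : ∑ k, ∑ l, christoffel (fun y => Real.exp (2 * φ y) • g y) k j l x
        * christoffel (fun y => Real.exp (2 * φ y) • g y) l i k x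
      = ∑ k, ∑ l, christoffel g k j l x * christoffel g l i k x
        + ((∑ k, ∑ l, christoffel g k j l x * Tt g φ l i k x)
          + (∑ k, ∑ l, Tt g φ k j l x * christoffel g l i k x)
          + (∑ k, ∑ l, Tt g φ k j l x * Tt g φ l i k x)) := by
    calc ∑ k, ∑ l, christoffel (fun y => Real.exp (2 * φ y) • g y) k j l x
          * christoffel (fun y => Real.exp (2 * φ y) • g y) l i k x
        = ∑ k, ∑ l, (christoffel g k j l x * christoffel g l i k x
            + (christoffel g k j l x * Tt g φ l i k x
              + Tt g φ k j l x * christoffel g l i k x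
              + Tt g φ k j l x * Tt g φ l i k x)) := by
          refine Finset.sum_congr rfl fun k _ => Finset.sum_congr rfl fun l _ => ?_
          rw [hconf k j l x, hconf l i k x]
          ring
      _ = _ := by
          simp only [Finset.sum_add_distrib]
  rw [Finset.sum_congr rfl fun k (_ : k ∈ Finset.univ) => t1 k,
    Finset.sum_congr rfl fun k (_ : k ∈ Finset.univ) => t2 k,
    Finset.sum_add_distrib, Finset.sum_add_distrib, t3, t4]
  ring

end Alg7

section Alg8

variable {g : En n → Matrix (Fin n) (Fin n) ℝ} {φ : En n → ℝ}

lemma contract_split (x : En n) (A B C D : Fin n → Fin n → ℝ) :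
    ∑ i, ∑ j, (g x)⁻¹ i j * (A i j - B i j + C i j - D i j)
      = (∑ i, ∑ j, (g x)⁻¹ i j * A i j) - (∑ i, ∑ j, (g x)⁻¹ i j * B i j)
        + (∑ i, ∑ j, (g x)⁻¹ i j * C i j) - (∑ i, ∑ j, (g x)⁻¹ i j * D i j) := by
  simp only [mul_add, mul_sub, Finset.sum_add_distrib, Finset.sum_sub_distrib]

lemma contract_split3 (x : En n) (A B C : Fin n → Fin n → ℝ) :
    ∑ i, ∑ j, (g x)⁻¹ i j * (A i j + B i j + C i j)
      = (∑ i, ∑ j, (g x)⁻¹ i j * A i j) + (∑ i, ∑ j, (g x)⁻¹ i j * B i j)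
        + (∑ i, ∑ j, (g x)⁻¹ i j * C i j) := by
  simp only [mul_add, Finset.sum_add_distrib]

lemma traceG_mul (hgpos : ∀ x, (g x).PosDef) (x : En n) (c : ℝ) :
    ∑ i, ∑ j, (g x)⁻¹ i j * (g x i j * c) = (n : ℝ) * c := by
  have e : ∀ i j : Fin n, (g x)⁻¹ i j * (g x i j * c) = ((g x)⁻¹ i j * g x i j) * c :=
    fun i j => by ring
  rw [Finset.sum_congr rfl fun i (_ : i ∈ Finset.univ) =>
    Finset.sum_congr rfl fun j (_ : j ∈ Finset.univ) => by rw [e i j]]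
  calc ∑ i, ∑ j, ((g x)⁻¹ i j * g x i j) * c
      = (∑ i, ∑ j, (g x)⁻¹ i j * g x i j) * c := by
        rw [Finset.sum_mul]
        exact Finset.sum_congr rfl fun i _ => by rw [Finset.sum_mul]
    _ = (n : ℝ) * c := by rw [traceGG hgpos x]

lemma contractA (hg : SmoothMetric g) (hgpos : ∀ x, (g x).PosDef) (hφ : ContDiff ℝ (⊤ : ℕ∞) φ)
    (x : En n) :
    ∑ i, ∑ j, (g x)⁻¹ i j * (∑ k, pd k (Tt g φ k i j) x)
      = 2 * GQform g φ x - ∑ k, Mm g k x * Vv g φ k x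
        - (n : ℝ) * (-∑ b, Nn g b x * Vv g φ b x + GQform g φ x) := by
  rw [Finset.sum_congr rfl fun i (_ : i ∈ Finset.univ) =>
    Finset.sum_congr rfl fun j (_ : j ∈ Finset.univ) => by
      rw [sum_pd_Tt hg hgpos hφ i j x]]
  have hsplit : ∀ i j : Fin n, (g x)⁻¹ i j * (pd j (pd i φ) x + pd i (pd j φ) x
      - (∑ k, pd k (fun z => g z i j) x * Vv g φ k x + g x i j * ∑ k, pd k (Vv g φ k) x))
      = (g x)⁻¹ i j * pd j (pd i φ) x + (g x)⁻¹ i j * pd i (pd j φ) x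
        - (g x)⁻¹ i j * (∑ k, pd k (fun z => g z i j) x * Vv g φ k x)
        - (g x)⁻¹ i j * (g x i j * ∑ k, pd k (Vv g φ k) x) := fun i j => by ring
  rw [Finset.sum_congr rfl fun i (_ : i ∈ Finset.univ) =>
    Finset.sum_congr rfl fun j (_ : j ∈ Finset.univ) => by rw [hsplit i j]]
  simp only [Finset.sum_sub_distrib, Finset.sum_add_distrib]
  rw [GQsymm hgpos x]
  rw [hS2gen x (fun k i j => pd k (fun z => g z i j) x) (fun k => Vv g φ k x)]
  rw [traceG_mul hgpos x (∑ k, pd k (Vv g φ k) x), sum_pd_Vv hg hgpos hφ x]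
  rw [show (∑ i, ∑ j, (g x)⁻¹ i j * pd i (pd j φ) x) = GQform g φ x from rfl]
  rw [show (∑ k, (∑ i, ∑ j, (g x)⁻¹ i j * pd k (fun z => g z i j) x) * Vv g φ k x)
    = ∑ k, Mm g k x * Vv g φ k x from rfl]
  ring

lemma contractB (hg : SmoothMetric g) (hgpos : ∀ x, (g x).PosDef) (hφ : ContDiff ℝ (⊤ : ℕ∞) φ)
    (x : En n) :
    ∑ i, ∑ j, (g x)⁻¹ i j * (∑ k, pd j (Tt g φ k i k) x) = (n : ℝ) * GQform g φ x := by
  rw [Finset.sum_congr rfl fun i (_ : i ∈ Finset.univ) =>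
    Finset.sum_congr rfl fun j (_ : j ∈ Finset.univ) => by
      rw [pd_TtTrace hg hgpos hφ i j x]]
  rw [← GQsymm hgpos x, Finset.mul_sum]
  refine Finset.sum_congr rfl fun i _ => ?_
  rw [Finset.mul_sum]
  exact Finset.sum_congr rfl fun j _ => by ring

lemma contractC1 (hgpos : ∀ x, (g x).PosDef) (x : En n) :
    ∑ i, ∑ j, (g x)⁻¹ i j * (∑ l, GammaC g l x * Tt g φ l i j x)
      = (2 - (n : ℝ)) * ∑ l, GammaC g l x * Vv g φ l x := by
  have e : ∀ i j : Fin n, (∑ l, GammaC g l x * Tt g φ l i j x)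
      = ∑ l, Tt g φ l i j x * GammaC g l x :=
    fun i j => Finset.sum_congr rfl fun l _ => by ring
  rw [Finset.sum_congr rfl fun i (_ : i ∈ Finset.univ) =>
    Finset.sum_congr rfl fun j (_ : j ∈ Finset.univ) => by rw [e i j]]
  rw [hS2gen x (fun l i j => Tt g φ l i j x) (fun l => GammaC g l x)]
  rw [Finset.mul_sum]
  refine Finset.sum_congr rfl fun l _ => ?_
  rw [contractGT hgpos x l]
  ring

lemma contractC2 (hgpos : ∀ x, (g x).PosDef) (x : En n) :
    ∑ i, ∑ j, (g x)⁻¹ i j * (∑ l, (n : ℝ) * pd l φ x * christoffel g l i j x)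
      = (n : ℝ) * ∑ k, GGamma g k x * pd k φ x := by
  have e : ∀ i j : Fin n, (∑ l, (n : ℝ) * pd l φ x * christoffel g l i j x)
      = ∑ l, christoffel g l i j x * ((n : ℝ) * pd l φ x) :=
    fun i j => Finset.sum_congr rfl fun l _ => by ring
  rw [Finset.sum_congr rfl fun i (_ : i ∈ Finset.univ) =>
    Finset.sum_congr rfl fun j (_ : j ∈ Finset.univ) => by rw [e i j]]
  rw [hS2gen x (fun l i j => christoffel g l i j x) (fun l => (n : ℝ) * pd l φ x)]
  rw [Finset.mul_sum]
  refine Finset.sum_congr rfl fun l _ => ?_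
  rw [show (∑ i, ∑ j, (g x)⁻¹ i j * christoffel g l i j x) = GGamma g l x from rfl]
  ring

lemma contractC3 (hgpos : ∀ x, (g x).PosDef) (x : En n) :
    ∑ i, ∑ j, (g x)⁻¹ i j * (∑ l, (n : ℝ) * pd l φ x * Tt g φ l i j x)
      = (n : ℝ) * (2 - (n : ℝ)) * gradSq g φ x := by
  have e : ∀ i j : Fin n, (∑ l, (n : ℝ) * pd l φ x * Tt g φ l i j x)
      = ∑ l, Tt g φ l i j x * ((n : ℝ) * pd l φ x) :=
    fun i j => Finset.sum_congr rfl fun l _ => by ring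
  rw [Finset.sum_congr rfl fun i (_ : i ∈ Finset.univ) =>
    Finset.sum_congr rfl fun j (_ : j ∈ Finset.univ) => by rw [e i j]]
  rw [hS2gen x (fun l i j => Tt g φ l i j x) (fun l => (n : ℝ) * pd l φ x)]
  have e2 : ∀ l : Fin n, (∑ i, ∑ j, (g x)⁻¹ i j * Tt g φ l i j x) * ((n : ℝ) * pd l φ x)
      = (n : ℝ) * (2 - (n : ℝ)) * (pd l φ x * Vv g φ l x) := by
    intro l
    rw [contractGT hgpos x l]
    ring
  rw [Finset.sum_congr rfl fun l (_ : l ∈ Finset.univ) => e2 l, ← Finset.mul_sum,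
    Wprime x]

lemma scalar_conf (hg : SmoothMetric g) (hgpos : ∀ x, (g x).PosDef)
    (hφ : ContDiff ℝ (⊤ : ℕ∞) φ) (x : En n) :
    scalarCurv (fun y => Real.exp (2 * φ y) • g y) x
      = (Real.exp (2 * φ x))⁻¹ * (scalarCurv g x - 2 * ((n : ℝ) - 1) * laplacian g φ x
          - ((n : ℝ) - 1) * ((n : ℝ) - 2) * gradSq g φ x) := by
  have hene : Real.exp (2 * φ x) ≠ 0 := Real.exp_ne_zero _
  have hinv : ∀ a b : Fin n, ((fun y => Real.exp (2 * φ y) • g y) x)⁻¹ a b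
      = (Real.exp (2 * φ x))⁻¹ * (g x)⁻¹ a b := by
    intro a b
    have hIsU : IsUnit (g x).det := (hgpos x).det_pos.ne'.isUnit
    have hmul : (Real.exp (2 * φ x) • g x) * ((Real.exp (2 * φ x))⁻¹ • (g x)⁻¹) = 1 := by
      rw [Matrix.smul_mul, Matrix.mul_smul, smul_smul, mul_inv_cancel₀ hene, one_smul,
        Matrix.mul_nonsing_inv _ hIsU]
    have h2 : ((fun y => Real.exp (2 * φ y) • g y) x)⁻¹
        = (Real.exp (2 * φ x))⁻¹ • (g x)⁻¹ := Matrix.inv_eq_right_inv hmul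
    rw [h2]
    simp [Matrix.smul_apply, smul_eq_mul]
  unfold scalarCurv
  have step1 : ∑ i, ∑ j, ((fun y => Real.exp (2 * φ y) • g y) x)⁻¹ i j
        * ricci (fun y => Real.exp (2 * φ y) • g y) i j x
      = (Real.exp (2 * φ x))⁻¹ * ((∑ i, ∑ j, (g x)⁻¹ i j * ricci g i j x)
          + ∑ i, ∑ j, (g x)⁻¹ i j *
            ((∑ k, pd k (Tt g φ k i j) x) - (∑ k, pd j (Tt g φ k i k) x)
              + (∑ l, (GammaC g l x * Tt g φ l i j x
                  + (n : ℝ) * pd l φ x * christoffel g l i j x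
                  + (n : ℝ) * pd l φ x * Tt g φ l i j x))
              - ((∑ k, ∑ l, christoffel g k j l x * Tt g φ l i k x)
                + (∑ k, ∑ l, Tt g φ k j l x * christoffel g l i k x)
                + (∑ k, ∑ l, Tt g φ k j l x * Tt g φ l i k x)))) := by
    rw [← Finset.sum_add_distrib, Finset.mul_sum]
    refine Finset.sum_congr rfl fun i _ => ?_
    rw [← Finset.sum_add_distrib, Finset.mul_sum]
    refine Finset.sum_congr rfl fun j _ => ?_
    rw [hinv i j, ricci_conf hg hgpos hφ i j x]
    ring
  rw [step1]
  congr 1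
  have hC : ∑ i, ∑ j, (g x)⁻¹ i j * (∑ l, (GammaC g l x * Tt g φ l i j x
        + (n : ℝ) * pd l φ x * christoffel g l i j x
        + (n : ℝ) * pd l φ x * Tt g φ l i j x))
      = (2 - (n : ℝ)) * (∑ l, GammaC g l x * Vv g φ l x)
        + (n : ℝ) * (∑ k, GGamma g k x * pd k φ x)
        + (n : ℝ) * (2 - (n : ℝ)) * gradSq g φ x := by
    have eC : ∀ i j : Fin n, (∑ l, (GammaC g l x * Tt g φ l i j x
          + (n : ℝ) * pd l φ x * christoffel g l i j x
          + (n : ℝ) * pd l φ x * Tt g φ l i j x))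
        = (∑ l, GammaC g l x * Tt g φ l i j x)
          + (∑ l, (n : ℝ) * pd l φ x * christoffel g l i j x)
          + (∑ l, (n : ℝ) * pd l φ x * Tt g φ l i j x) := fun i j => by
      simp only [Finset.sum_add_distrib]
    rw [Finset.sum_congr rfl fun i (_ : i ∈ Finset.univ) =>
      Finset.sum_congr rfl fun j (_ : j ∈ Finset.univ) => by rw [eC i j]]
    rw [contract_split3 x _ _ _, contractC1 hgpos x, contractC2 hgpos x, contractC3 hgpos x]
  have hD : ∑ i, ∑ j, (g x)⁻¹ i j * ((∑ k, ∑ l, christoffel g k j l x * Tt g φ l i k x)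
        + (∑ k, ∑ l, Tt g φ k j l x * christoffel g l i k x)
        + (∑ k, ∑ l, Tt g φ k j l x * Tt g φ l i k x))
      = (∑ k, GGamma g k x * pd k φ x) + (∑ k, GGamma g k x * pd k φ x)
        + (2 - (n : ℝ)) * gradSq g φ x := by
    rw [contract_split3 x _ _ _, contract6 hgpos x, contract7 hgpos x, contract8 hgpos x]
  rw [contract_split x _ _ _ _]
  rw [contractA hg hgpos hφ x, contractB hg hgpos hφ x, hC, hD]
  rw [GammaCV hgpos x, GGammaP hgpos x, laplacian_eq hgpos x, GGammaP hgpos x]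
  have hNM : ∑ b, (Nn g b x - (1/2) * Mm g b x) * Vv g φ b x
      = (∑ b, Nn g b x * Vv g φ b x) - (1/2) * ∑ b, Mm g b x * Vv g φ b x := by
    rw [Finset.mul_sum, ← Finset.sum_sub_distrib]
    exact Finset.sum_congr rfl fun b _ => by ring
  rw [hNM]
  ring

end Alg8

section Energy

variable {g K : En n → Matrix (Fin n) (Fin n) ℝ} {φ : En n → ℝ}

lemma inv_entry_conf (hgpos : ∀ x, (g x).PosDef) (x : En n) (a b : Fin n) :
    ((fun y => Real.exp (2 * φ y) • g y) x)⁻¹ a b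
      = (Real.exp (2 * φ x))⁻¹ * (g x)⁻¹ a b := by
  have hene : Real.exp (2 * φ x) ≠ 0 := Real.exp_ne_zero _
  have hIsU : IsUnit (g x).det := (hgpos x).det_pos.ne'.isUnit
  have hmul : (Real.exp (2 * φ x) • g x) * ((Real.exp (2 * φ x))⁻¹ • (g x)⁻¹) = 1 := by
    rw [Matrix.smul_mul, Matrix.mul_smul, smul_smul, mul_inv_cancel₀ hene, one_smul,
      Matrix.mul_nonsing_inv _ hIsU]
  have h2 : ((fun y => Real.exp (2 * φ y) • g y) x)⁻¹
      = (Real.exp (2 * φ x))⁻¹ • (g x)⁻¹ := Matrix.inv_eq_right_inv hmul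
  rw [h2]
  simp [Matrix.smul_apply, smul_eq_mul]

lemma normSq_conf (hgpos : ∀ x, (g x).PosDef) (x : En n) :
    normSqTensor (fun y => Real.exp (2 * φ y) • g y) (fun y => Real.exp (φ y) • K y) x
      = (Real.exp (2 * φ x))⁻¹ * normSqTensor g K x := by
  unfold normSqTensor
  simp only [Finset.mul_sum]
  refine Finset.sum_congr rfl fun i _ => Finset.sum_congr rfl fun j _ =>
    Finset.sum_congr rfl fun k _ => Finset.sum_congr rfl fun l _ => ?_
  rw [inv_entry_conf hgpos x i k, inv_entry_conf hgpos x j l]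
  have hE : Real.exp (2 * φ x) = Real.exp (φ x) * Real.exp (φ x) := by
    rw [← Real.exp_add]; ring_nf
  simp only [Matrix.smul_apply, smul_eq_mul]
  rw [hE]
  have h0 : Real.exp (φ x) ≠ 0 := Real.exp_ne_zero _
  field_simp

lemma tr_conf (hgpos : ∀ x, (g x).PosDef) (x : En n) :
    trTensor (fun y => Real.exp (2 * φ y) • g y) (fun y => Real.exp (φ y) • K y) x
      = (Real.exp (φ x))⁻¹ * trTensor g K x := by
  unfold trTensor
  simp only [Finset.mul_sum]
  refine Finset.sum_congr rfl fun i _ => Finset.sum_congr rfl fun j _ => ?_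
  rw [inv_entry_conf hgpos x i j]
  have hE : Real.exp (2 * φ x) = Real.exp (φ x) * Real.exp (φ x) := by
    rw [← Real.exp_add]; ring_nf
  simp only [Matrix.smul_apply, smul_eq_mul]
  rw [hE]
  have h0 : Real.exp (φ x) ≠ 0 := Real.exp_ne_zero _
  field_simp

lemma lemma22 (hg : SmoothMetric g) (hgpos : ∀ x, (g x).PosDef)
    (hφ : ContDiff ℝ (⊤ : ℕ∞) φ) (x : En n) :
    2 * Real.exp (2 * φ x) * energyDensity (fun y => Real.exp (2 * φ y) • g y)
        (fun y => Real.exp (φ y) • K y) x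
      = 2 * energyDensity g K x - 2 * ((n : ℝ) - 1) * laplacian g φ x
        - ((n : ℝ) - 1) * ((n : ℝ) - 2) * gradSq g φ x := by
  unfold energyDensity
  rw [scalar_conf hg hgpos hφ x, normSq_conf hgpos x, tr_conf hgpos x]
  have hE : Real.exp (2 * φ x) = Real.exp (φ x) * Real.exp (φ x) := by
    rw [← Real.exp_add]; ring_nf
  have h0 : Real.exp (φ x) ≠ 0 := Real.exp_ne_zero _
  rw [hE]
  field_simp
  ring

lemma gradSq_nonneg (hgpos : ∀ x, (g x).PosDef) (f : En n → ℝ) (x : En n) :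
    0 ≤ gradSq g f x := by
  have h := ((hgpos x).inv.posSemidef).dotProduct_mulVec_nonneg (fun i => pd i f x)
  rw [star_trivial] at h
  unfold gradSq
  convert h using 1
  · rfl
  rw [dotProduct]
  refine Finset.sum_congr rfl fun i _ => ?_
  rw [Matrix.mulVec, dotProduct, Finset.mul_sum]
  exact Finset.sum_congr rfl fun j _ => by ring

end Energy

section Scaling

variable {g : En n → Matrix (Fin n) (Fin n) ℝ} {f : En n → ℝ}

lemma laplacian_const_mul (hf : ContDiff ℝ (⊤ : ℕ∞) f) (β : ℝ) (x : En n) :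
    laplacian g (fun y => β * f y) x = β * laplacian g f x := by
  have df : ∀ z, DifferentiableAt ℝ f z := fun z => (hf.differentiable (by simp)).differentiableAt
  have h1 : ∀ j : Fin n, pd j (fun y => β * f y) = fun z => β * pd j f z :=
    fun j => funext fun z => pd_const_mul β (df z)
  unfold laplacian hess
  rw [Finset.mul_sum]
  refine Finset.sum_congr rfl fun i _ => ?_
  rw [Finset.mul_sum]
  refine Finset.sum_congr rfl fun j _ => ?_
  have h2 : pd i (pd j fun y => β * f y) x = β * pd i (pd j f) x := by
    rw [h1 j]
    exact pd_const_mul β (((contDiff_pd j hf).differentiable (by simp)).differentiableAt)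
  have h3 : ∑ k, christoffel g k i j x * pd k (fun y => β * f y) x
      = β * ∑ k, christoffel g k i j x * pd k f x := by
    rw [Finset.mul_sum]
    refine Finset.sum_congr rfl fun k _ => ?_
    rw [h1 k]
    ring
  rw [h2, h3]
  ring

lemma gradSq_const_mul (hf : ContDiff ℝ (⊤ : ℕ∞) f) (β : ℝ) (x : En n) :
    gradSq g (fun y => β * f y) x = β ^ 2 * gradSq g f x := by
  have df : ∀ z, DifferentiableAt ℝ f z := fun z => (hf.differentiable (by simp)).differentiableAt
  have h1 : ∀ j : Fin n, pd j (fun y => β * f y) = fun z => β * pd j f z :=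
    fun j => funext fun z => pd_const_mul β (df z)
  unfold gradSq
  rw [Finset.mul_sum]
  refine Finset.sum_congr rfl fun i _ => ?_
  rw [Finset.mul_sum]
  refine Finset.sum_congr rfl fun j _ => ?_
  rw [h1 i, h1 j]
  ring

end Scaling


/-- convex-combination formula for the conformally-changed energy density.
If the `β = 1` relation `2 e^{2f} μ̃ = 2μ − 2(n−1)Δ_g f − (n−1)(n−2)|∇_g f|²` holds,
then for `0 < β ≤ 1` the energy density `μ̄` of `(e^{2βf} g, e^{βf} K)` satisfies
`μ̄ = e^{−2βf}((1−β)μ + β e^{2f} μ̃ + β(1−β)(n−1)(n−2)|∇_g f|²/2)`; in particular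
`(1−β)μ + β e^{2f} μ̃ ≥ 0` pointwise implies `μ̄ ≥ 0` pointwise. -/
theorem energyDensity_convex (n : ℕ) (g K : En n → Matrix (Fin n) (Fin n) ℝ)
    (f : En n → ℝ) (β : ℝ) (hβ : 0 < β) (hβ1 : β ≤ 1)
    (hg : SmoothMetric g) (hgpos : ∀ x, (g x).PosDef)
    (hK : ∀ i j, ContDiff ℝ (⊤ : ℕ∞) (fun x => K x i j)) (hKsymm : ∀ x, (K x).IsSymm)
    (hf : ContDiff ℝ (⊤ : ℕ∞) f)
    (gbar Kbar gtil Ktil : En n → Matrix (Fin n) (Fin n) ℝ)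
    (hgbar : ∀ x, gbar x = Real.exp (2 * β * f x) • g x)
    (hKbar : ∀ x, Kbar x = Real.exp (β * f x) • K x)
    (hgtil : ∀ x, gtil x = Real.exp (2 * f x) • g x)
    (hKtil : ∀ x, Ktil x = Real.exp (f x) • K x)
    (hbeta1 : ∀ x, 2 * Real.exp (2 * f x) * energyDensity gtil Ktil x =
      2 * energyDensity g K x - 2 * ((n : ℝ) - 1) * laplacian g f x
        - ((n : ℝ) - 1) * ((n : ℝ) - 2) * gradSq g f x) :
    (∀ x, energyDensity gbar Kbar x =
      Real.exp (-2 * β * f x) *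
        ((1 - β) * energyDensity g K x
          + β * Real.exp (2 * f x) * energyDensity gtil Ktil x
          + β * (1 - β) * ((n : ℝ) - 1) * ((n : ℝ) - 2) * gradSq g f x / 2)) ∧
    ((∀ x, 0 ≤ (1 - β) * energyDensity g K x
        + β * Real.exp (2 * f x) * energyDensity gtil Ktil x) →
      ∀ x, 0 ≤ energyDensity gbar Kbar x) := by
  have hφβ : ContDiff ℝ (⊤ : ℕ∞) (fun y => β * f y) := contDiff_const.mul hf
  have hgbar' : gbar = fun y => Real.exp (2 * (β * f y)) • g y := funext fun y => by
    rw [hgbar y, show (2 : ℝ) * (β * f y) = 2 * β * f y from by ring]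
  have hKbar' : Kbar = fun y => Real.exp (β * f y) • K y := funext fun y => hKbar y
  have key : ∀ x, 2 * Real.exp (2 * β * f x) * energyDensity gbar Kbar x
      = 2 * energyDensity g K x - 2 * ((n : ℝ) - 1) * (β * laplacian g f x)
        - ((n : ℝ) - 1) * ((n : ℝ) - 2) * (β ^ 2 * gradSq g f x) := by
    intro x
    rw [hgbar', hKbar']
    have h22 := lemma22 (K := K) hg hgpos hφβ x
    rw [laplacian_const_mul hf β x, gradSq_const_mul hf β x] at h22
    rw [show (2 : ℝ) * β * f x = 2 * (β * f x) from by ring]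
    exact h22
  have hC : (0 : ℝ) ≤ ((n : ℝ) - 1) * ((n : ℝ) - 2) := by
    rcases lt_or_ge n 2 with h | h
    · interval_cases n <;> norm_num
    · have h2 : (2 : ℝ) ≤ (n : ℝ) := by exact_mod_cast h
      nlinarith
  have main : ∀ x, energyDensity gbar Kbar x =
      Real.exp (-2 * β * f x) *
        ((1 - β) * energyDensity g K x
          + β * Real.exp (2 * f x) * energyDensity gtil Ktil x
          + β * (1 - β) * ((n : ℝ) - 1) * ((n : ℝ) - 2) * gradSq g f x / 2) := by
    intro x
    have hEne : Real.exp (2 * β * f x) ≠ 0 := Real.exp_ne_zero _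
    have hexpneg : Real.exp (-2 * β * f x) = (Real.exp (2 * β * f x))⁻¹ := by
      rw [show (-2 : ℝ) * β * f x = -(2 * β * f x) from by ring, Real.exp_neg]
    rw [hexpneg]
    have h1 := key x
    have h2 := hbeta1 x
    apply mul_left_cancel₀ (show (2 : ℝ) * Real.exp (2 * β * f x) ≠ 0 from by
      positivity)
    rw [show 2 * Real.exp (2 * β * f x) * ((Real.exp (2 * β * f x))⁻¹ *
        ((1 - β) * energyDensity g K x
          + β * Real.exp (2 * f x) * energyDensity gtil Ktil x
          + β * (1 - β) * ((n : ℝ) - 1) * ((n : ℝ) - 2) * gradSq g f x / 2))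
      = 2 * ((1 - β) * energyDensity g K x
          + β * Real.exp (2 * f x) * energyDensity gtil Ktil x
          + β * (1 - β) * ((n : ℝ) - 1) * ((n : ℝ) - 2) * gradSq g f x / 2) from by
        field_simp]
    rw [h1]
    linear_combination (-β) * h2
  refine ⟨main, fun hpos x => ?_⟩
  rw [main x]
  have hW := gradSq_nonneg hgpos f x
  have hterm : 0 ≤ β * (1 - β) * ((n : ℝ) - 1) * ((n : ℝ) - 2) * gradSq g f x / 2 := by
    have h5 : 0 ≤ β * (1 - β) := mul_nonneg hβ.le (by linarith)
    nlinarith [mul_nonneg (mul_nonneg h5 hC) hW]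
  have hexp : 0 < Real.exp (-2 * β * f x) := Real.exp_pos _
  exact mul_nonneg hexp.le (by linarith [hpos x, hterm])
end Alg5
end Conf
end
end

section
/- Under the hypotheses of Corollary 2.3 (f decaying as |f| + r|∇_g f| + r|Δ_g f|^{1/2} ≤ C r^{−τ}), with ḡ = e^{2βf}g, K̄ = e^{βf}K, g̃ = e^{2f}g, K̃ = e^{f}K, the ADM energies satisfy Ē = (1−β)E + βẼ at each end. -/
open scoped BigOperators
open MeasureTheory Filter Topology

noncomputable section

variable {n : ℕ}

/-- Raised-index tensor `π^{ij} = K^{ij} − (tr_g K) g^{ij}`. -/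
def piUp (g K : En n → Matrix (Fin n) (Fin n) ℝ) (i j : Fin n) (x : En n) : ℝ :=
  (∑ k, ∑ l, (g x)⁻¹ i k * (g x)⁻¹ j l * K x k l) - trTensor g K x * (g x)⁻¹ i j

/-- The momentum density `J^i = ∇_j (K^{ij} − (tr_g K) g^{ij})`, the covariant divergence
computed in coordinates. -/
def momentumDensity (g K : En n → Matrix (Fin n) (Fin n) ℝ) (i : Fin n) (x : En n) : ℝ :=
  ∑ j, (pd j (fun y => piUp g K i j y) x
    + (∑ k, christoffel g i j k x * piUp g K k j x)
    + (∑ k, christoffel g j j k x * piUp g K i k x))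

/-- The `g`-norm of a vector field: `|V|_g = √(g_{ij} V^i V^j)`. -/
def normVec (g : En n → Matrix (Fin n) (Fin n) ℝ) (V : En n → Fin n → ℝ) (x : En n) : ℝ :=
  Real.sqrt (∑ i, ∑ j, g x i j * V x i * V x j)

/-- `(M^n, g, K)` (in a global asymptotically flat coordinate chart of one end) is an
asymptotically flat initial data set with decay rate `τ`. -/
def IsAFData (n : ℕ) (τ : ℝ) (g K : En n → Matrix (Fin n) (Fin n) ℝ) : Prop :=
  (∀ i j, ContDiff ℝ (⊤ : ℕ∞) fun x => g x i j) ∧ (∀ i j, ContDiff ℝ (⊤ : ℕ∞) fun x => K x i j) ∧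
  (∀ x, (g x).PosDef) ∧ (∀ x, (K x).IsSymm) ∧
  max (1/2) ((n : ℝ) - 3) < τ ∧
  ∃ C R ε : ℝ, 0 < C ∧ 0 < R ∧ 0 < ε ∧ ∀ x : En n, R ≤ ‖x‖ →
    ((∀ i j k, |g x i j - if i = j then (1:ℝ) else 0| + ‖x‖ * |pd k (fun y => g y i j) x|
        + ‖x‖ * |K x i j| ≤ C * ‖x‖ ^ (-τ)) ∧
      |energyDensity g K x| ≤ C * ‖x‖ ^ (-(n : ℝ) - ε) ∧
      normVec g (fun y i => momentumDensity g K i y) x ≤ C * ‖x‖ ^ (-(n : ℝ) - ε))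

/-- The decay condition `|f| + r|∇_g f| + r|Δ_g f|^{1/2} ≤ C r^{−τ}` on the end. -/
def AFDecay (n : ℕ) (τ : ℝ) (g : En n → Matrix (Fin n) (Fin n) ℝ) (f : En n → ℝ) : Prop :=
  ContDiff ℝ (⊤ : ℕ∞) f ∧
  ∃ C R : ℝ, 0 < C ∧ 0 < R ∧ ∀ x : En n, R ≤ ‖x‖ →
    |f x| + ‖x‖ * Real.sqrt (gradSq g f x) + ‖x‖ * Real.sqrt |laplacian g f x| ≤
      C * ‖x‖ ^ (-τ)

/-- The volume of the standard unit `(n−1)`-sphere. -/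
def sphereVol (n : ℕ) : ℝ := (μH[(n : ℝ) - 1] (Metric.sphere (0 : En n) 1)).toReal

/-- `E` is the ADM energy of `g` (at the given end, in AF coordinates):
`E = (1/(2(n−1)ω_{n−1})) lim_{r→∞} ∫_{S_r} Σ_{i,j} (g_{ij,i} − g_{ii,j}) ν₀^j dσ_r`. -/
def HasADMEnergy (n : ℕ) (g : En n → Matrix (Fin n) (Fin n) ℝ) (E : ℝ) : Prop :=
  Tendsto (fun r : ℝ =>
    (1 / (2 * ((n : ℝ) - 1) * sphereVol n)) *
      ∫ x in Metric.sphere (0 : En n) r,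
        (∑ i, ∑ j, (pd i (fun y => g y i j) x - pd j (fun y => g y i i) x) * (x j / r))
        ∂(μH[(n : ℝ) - 1])) atTop (𝓝 E)

/-- `P` is the ADM momentum of `(g, K)` (at the given end, in AF coordinates):
`P_i = (1/((n−1)ω_{n−1})) lim_{r→∞} ∫_{S_r} Σ_j (K_{ij} − (tr_g K) g_{ij}) ν₀^j dσ_r`. -/
def HasADMMomentum (n : ℕ) (g K : En n → Matrix (Fin n) (Fin n) ℝ) (P : Fin n → ℝ) : Prop :=
  ∀ i, Tendsto (fun r : ℝ =>
    (1 / (((n : ℝ) - 1) * sphereVol n)) *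
      ∫ x in Metric.sphere (0 : En n) r,
        (∑ j, (K x i j - trTensor g K x * g x i j) * (x j / r))
        ∂(μH[(n : ℝ) - 1])) atTop (𝓝 (P i))


section Helpers

open Matrix Pointwise
open scoped NNReal ENNReal

lemma pd_continuous (i : Fin n) (h : En n → ℝ) (hh : ContDiff ℝ (⊤ : ℕ∞) h) :
    Continuous (pd i h) := by
  have : Continuous (fun x => fderiv ℝ h x) := (hh.fderiv_right (m := (⊤ : ℕ∞)) (by simp)).continuous
  exact (this.clm_apply continuous_const)

lemma pd_exp_mul (c : ℝ) (f h : En n → ℝ) (hf : ContDiff ℝ (⊤ : ℕ∞) f) (hh : ContDiff ℝ (⊤ : ℕ∞) h)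
    (i : Fin n) (x : En n) :
    pd i (fun y => Real.exp (c * f y) * h y) x
      = Real.exp (c * f x) * (c * pd i f x * h x + pd i h x) := by
  have hf' : HasFDerivAt f (fderiv ℝ f x) x := (hf.differentiable (by simp) x).hasFDerivAt
  have hh' : HasFDerivAt h (fderiv ℝ h x) x := (hh.differentiable (by simp) x).hasFDerivAt
  have he : HasFDerivAt (fun y => Real.exp (c * f y))
      (Real.exp (c * f x) • (c • fderiv ℝ f x)) x := (hf'.const_mul c).exp
  have : fderiv ℝ (fun y => Real.exp (c * f y) * h y) x = _ := (he.mul hh').fderiv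
  rw [pd, this]
  simp [pd]
  ring

lemma qf_sym (A : Matrix (Fin n) (Fin n) ℝ) (hA : A.IsHermitian) (v w : Fin n → ℝ) :
    w ⬝ᵥ (A *ᵥ v) = v ⬝ᵥ (A *ᵥ w) := by
  simp only [dotProduct, Matrix.mulVec, dotProduct, Finset.mul_sum]
  rw [Finset.sum_comm]
  refine Finset.sum_congr rfl fun i _ => Finset.sum_congr rfl fun j _ => ?_
  have h : A i j = A j i := by
    have := hA.apply i j
    simpa using this.symm
  rw [h]; ring

lemma qf_cs (A : Matrix (Fin n) (Fin n) ℝ) (hA : A.PosSemidef) (v w : Fin n → ℝ) :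
    (v ⬝ᵥ (A *ᵥ w))^2 ≤ (v ⬝ᵥ (A *ᵥ v)) * (w ⬝ᵥ (A *ᵥ w)) := by
  have key : ∀ t : ℝ, 0 ≤ (w ⬝ᵥ (A *ᵥ w)) * (t * t) + (2 * (v ⬝ᵥ (A *ᵥ w))) * t
      + (v ⬝ᵥ (A *ᵥ v)) := by
    intro t
    have h0 := hA.dotProduct_mulVec_nonneg (v + t • w)
    simp only [RCLike.re_to_real, star_trivial] at h0
    have hexp : (v + t • w) ⬝ᵥ (A *ᵥ (v + t • w))
        = (w ⬝ᵥ (A *ᵥ w)) * (t * t) + (2 * (v ⬝ᵥ (A *ᵥ w))) * t + (v ⬝ᵥ (A *ᵥ v)) := by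
      have hsym := qf_sym A hA.1 v w
      simp only [Matrix.mulVec_add, Matrix.mulVec_smul, dotProduct_add, add_dotProduct,
        dotProduct_smul, smul_dotProduct, smul_eq_mul] at *
      rw [hsym]; ring
    rw [hexp] at h0; exact h0
  have hd := discrim_le_zero key
  rw [discrim] at hd
  nlinarith [hd]

lemma inv_qf_ge (A : Matrix (Fin n) (Fin n) ℝ) (hA : A.PosDef)
    (h2 : ∀ v : Fin n → ℝ, v ⬝ᵥ (A *ᵥ v) ≤ 2 * (v ⬝ᵥ v)) (v : Fin n → ℝ) :
    v ⬝ᵥ v ≤ 2 * (v ⬝ᵥ (A⁻¹ *ᵥ v)) := by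
  set w := A⁻¹ *ᵥ v with hw
  have hAw : A *ᵥ w = v := by
    rw [hw, Matrix.mulVec_mulVec, Matrix.mul_nonsing_inv _ hA.det_pos.ne'.isUnit, Matrix.one_mulVec]
  rcases eq_or_ne (v ⬝ᵥ v) 0 with h0 | h0
  · have hv : v = 0 := dotProduct_self_eq_zero.mp h0
    simp [hv, hw]
  · have hcs := qf_cs A hA.posSemidef v w
    rw [hAw] at hcs
    have hvv : 0 < v ⬝ᵥ v := lt_of_le_of_ne (by
      have : (0:ℝ) ≤ ∑ i, v i * v i := Finset.sum_nonneg fun i _ => mul_self_nonneg _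
      simpa [dotProduct] using this) (Ne.symm h0)
    have hq : 0 ≤ w ⬝ᵥ v := by
      have h := hA.posSemidef.dotProduct_mulVec_nonneg w
      simp only [RCLike.re_to_real, star_trivial] at h
      rw [hAw] at h
      exact h
    have hup := h2 v
    rw [dotProduct_comm v w]
    nlinarith [hcs, hup, hvv, hq]

lemma qf_upper (A : Matrix (Fin n) (Fin n) ℝ) (δ : ℝ) (hδ : 0 ≤ δ) (hδn : (n:ℝ) * δ ≤ 1)
    (hA : ∀ i j, |A i j - if i = j then (1:ℝ) else 0| ≤ δ) (v : Fin n → ℝ) :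
    v ⬝ᵥ (A *ᵥ v) ≤ 2 * (v ⬝ᵥ v) := by
  have h1 : v ⬝ᵥ (A *ᵥ v) = ∑ i, ∑ j, A i j * (v i * v j) := by
    simp only [dotProduct, Matrix.mulVec, dotProduct, Finset.mul_sum]
    exact Finset.sum_congr rfl fun i _ => Finset.sum_congr rfl fun j _ => by ring
  have h2 : v ⬝ᵥ v = ∑ i, ∑ j, (if i = j then (1:ℝ) else 0) * (v i * v j) := by
    simp [dotProduct, ite_mul, Finset.sum_ite_eq, mul_comm]
  have h3 : v ⬝ᵥ (A *ᵥ v) - v ⬝ᵥ v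
      = ∑ i, ∑ j, (A i j - if i = j then (1:ℝ) else 0) * (v i * v j) := by
    rw [h1, h2, ← Finset.sum_sub_distrib]
    exact Finset.sum_congr rfl fun i _ => by
      rw [← Finset.sum_sub_distrib]
      exact Finset.sum_congr rfl fun j _ => by ring
  have h4 : ∑ i, ∑ j, (A i j - if i = j then (1:ℝ) else 0) * (v i * v j)
      ≤ δ * (∑ i, |v i|) ^ 2 := by
    calc ∑ i, ∑ j, (A i j - if i = j then (1:ℝ) else 0) * (v i * v j)
        ≤ ∑ i, ∑ j, δ * (|v i| * |v j|) := by
          refine Finset.sum_le_sum fun i _ => Finset.sum_le_sum fun j _ => ?_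
          calc (A i j - if i = j then (1:ℝ) else 0) * (v i * v j)
              ≤ |(A i j - if i = j then (1:ℝ) else 0) * (v i * v j)| := le_abs_self _
            _ = |A i j - if i = j then (1:ℝ) else 0| * (|v i| * |v j|) := by
                rw [abs_mul, abs_mul]
            _ ≤ δ * (|v i| * |v j|) :=
                mul_le_mul_of_nonneg_right (hA i j) (by positivity)
      _ = δ * (∑ i, |v i|) ^ 2 := by
          rw [sq, Finset.sum_mul_sum, Finset.mul_sum]
          exact Finset.sum_congr rfl fun i _ => by rw [Finset.mul_sum]
  have h5 : (∑ i, |v i|) ^ 2 ≤ (n : ℝ) * (v ⬝ᵥ v) := by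
    have := sq_sum_le_card_mul_sum_sq (s := (Finset.univ : Finset (Fin n)))
      (f := fun i => |v i|)
    simp only [Finset.card_univ, Fintype.card_fin, sq_abs] at this
    calc (∑ i, |v i|) ^ 2 ≤ (n : ℝ) * ∑ i, v i ^ 2 := this
      _ = (n : ℝ) * (v ⬝ᵥ v) := by
          congr 1; simp [dotProduct, sq]
  have hvv : 0 ≤ v ⬝ᵥ v := by
    have : (0:ℝ) ≤ ∑ i, v i * v i := Finset.sum_nonneg fun i _ => mul_self_nonneg _
    simpa [dotProduct] using this
  nlinarith [h3, h4, h5, hvv, mul_le_mul_of_nonneg_left h5 hδ]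

lemma abs_coord_le_norm (x : En n) (j : Fin n) : |x j| ≤ ‖x‖ := by
  rw [EuclideanSpace.norm_eq x, ← Real.sqrt_sq_eq_abs]
  apply Real.sqrt_le_sqrt
  have : (x j)^2 ≤ ∑ i, (x i)^2 :=
    Finset.single_le_sum (fun i _ => sq_nonneg (x i)) (Finset.mem_univ j)
  simpa [sq_abs] using this

lemma sphere_measure_smul (hn : 1 ≤ n) {r : ℝ} (hr : 0 < r) :
    μH[(n:ℝ)-1] (Metric.sphere (0 : En n) r)
      = (‖r‖₊ ^ ((n:ℝ)-1) : ℝ≥0) • μH[(n:ℝ)-1] (Metric.sphere (0 : En n) 1) := by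
  have hd : (0:ℝ) ≤ (n:ℝ) - 1 := by
    have : (1:ℝ) ≤ (n:ℝ) := by exact_mod_cast hn
    linarith
  have hs : (r : ℝ) • Metric.sphere (0 : En n) 1 = Metric.sphere (0 : En n) r := by
    rw [smul_sphere' (ne_of_gt hr) (0 : En n) 1]
    simp [abs_of_pos hr, Real.norm_eq_abs]
  rw [← hs, MeasureTheory.Measure.hausdorffMeasure_smul₀ hd (ne_of_gt hr)]

lemma sphere_measure_scale (hn : 1 ≤ n) {r : ℝ} (hr : 0 < r) :
    (μH[(n:ℝ)-1] (Metric.sphere (0 : En n) r)).toReal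
      = r ^ ((n:ℝ)-1) * (μH[(n:ℝ)-1] (Metric.sphere (0 : En n) 1)).toReal := by
  rw [sphere_measure_smul hn hr, ENNReal.smul_def, smul_eq_mul, ENNReal.toReal_mul]
  congr 1
  simp [ENNReal.coe_toReal, NNReal.coe_rpow, coe_nnnorm, Real.norm_eq_abs, abs_of_pos hr]

lemma sphere_measure_ne_top (hn : 1 ≤ n) {r : ℝ} (hr : 0 < r)
    (h1 : μH[(n:ℝ)-1] (Metric.sphere (0 : En n) 1) ≠ ⊤) :
    μH[(n:ℝ)-1] (Metric.sphere (0 : En n) r) ≠ ⊤ := by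
  rw [sphere_measure_smul hn hr, ENNReal.smul_def, smul_eq_mul]
  exact ENNReal.mul_ne_top ENNReal.coe_ne_top h1

lemma integrableOn_sphere (φ : En n → ℝ) (hφ : Continuous φ) (r : ℝ)
    (hfin : μH[(n:ℝ)-1] (Metric.sphere (0:En n) r) ≠ ⊤) :
    IntegrableOn φ (Metric.sphere (0:En n) r) μH[(n:ℝ)-1] := by
  obtain ⟨C, hC⟩ := (isCompact_sphere (0:En n) r).exists_bound_of_continuousOn hφ.continuousOn
  refine ⟨hφ.aestronglyMeasurable.restrict, ?_⟩
  exact HasFiniteIntegral.restrict_of_bounded (C := C) (lt_top_iff_ne_top.2 hfin)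
    ((ae_restrict_iff' Metric.isClosed_sphere.measurableSet).2 (ae_of_all _ hC))

lemma abs_setIntegral_le {μ : Measure (En n)} (φ : En n → ℝ) {s : Set (En n)}
    (hs : MeasurableSet s) (hfin : μ s ≠ ⊤) {C : ℝ} (hC : ∀ x ∈ s, |φ x| ≤ C) :
    |∫ x in s, φ x ∂μ| ≤ C * (μ s).toReal := by
  haveI : IsFiniteMeasure (μ.restrict s) :=
    ⟨by rwa [Measure.restrict_apply_univ, lt_top_iff_ne_top]⟩
  have := norm_integral_le_of_norm_le_const (μ := μ.restrict s) (f := φ) (C := C)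
    ((ae_restrict_iff' hs).2 (ae_of_all _ (by simpa [Real.norm_eq_abs] using hC)))
  simpa [Real.norm_eq_abs, Measure.restrict_apply_univ, measureReal_def] using this

lemma F_continuous (h : Fin n → Fin n → En n → ℝ)
    (hh : ∀ i j, ContDiff ℝ (⊤ : ℕ∞) (h i j)) (r : ℝ) :
    Continuous (fun x : En n =>
      ∑ i, ∑ j, (pd i (h i j) x - pd j (h i i) x) * (x j / r)) := by
  refine continuous_finset_sum _ fun i _ => continuous_finset_sum _ fun j _ => ?_
  exact ((pd_continuous _ _ (hh i j)).sub (pd_continuous _ _ (hh i i))).mul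
    (Continuous.div_const (show Continuous fun x : En n => x j from PiLp.continuous_apply (p := 2) (β := fun _ : Fin n => ℝ) j) r)

lemma gradSq_eq (g : En n → Matrix (Fin n) (Fin n) ℝ) (f : En n → ℝ) (x : En n) :
    gradSq g f x = (fun k => pd k f x) ⬝ᵥ ((g x)⁻¹ *ᵥ fun k => pd k f x) := by
  simp only [gradSq, dotProduct, Matrix.mulVec, dotProduct, Finset.mul_sum]
  exact Finset.sum_congr rfl fun i _ => Finset.sum_congr rfl fun j _ => by ring

lemma sqrt_two_le_two : Real.sqrt 2 ≤ 2 := by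
  nlinarith [Real.sq_sqrt (by norm_num : (2:ℝ) ≥ 0), Real.sqrt_nonneg 2]

lemma pd_f_bound (g : En n → Matrix (Fin n) (Fin n) ℝ) (f : En n → ℝ) (x : En n)
    (hgpos : (g x).PosDef) {δ₁ η₂ : ℝ} (hδ₁ : 0 ≤ δ₁) (hδ₁n : (n:ℝ) * δ₁ ≤ 1)
    (hge : ∀ i j, |g x i j - if i = j then (1:ℝ) else 0| ≤ δ₁)
    (hfd : Real.sqrt (gradSq g f x) ≤ η₂) (k : Fin n) : |pd k f x| ≤ 2 * η₂ := by
  set v : Fin n → ℝ := fun k => pd k f x with hv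
  have h2 := qf_upper (g x) δ₁ hδ₁ hδ₁n hge
  have hiq := inv_qf_ge (g x) hgpos h2 v
  rw [← gradSq_eq] at hiq
  have hvk : (pd k f x)^2 ≤ v ⬝ᵥ v := by
    have : v k * v k ≤ ∑ i, v i * v i :=
      Finset.single_le_sum (f := fun i => v i * v i) (fun i _ => mul_self_nonneg _)
        (Finset.mem_univ k)
    simpa [dotProduct, sq, hv] using this
  have hvv0 : (0:ℝ) ≤ v ⬝ᵥ v := by
    have : (0:ℝ) ≤ ∑ i, v i * v i := Finset.sum_nonneg fun i _ => mul_self_nonneg _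
    simpa [dotProduct] using this
  have hgs0 : 0 ≤ gradSq g f x := by nlinarith
  have hη₂0 : 0 ≤ η₂ := le_trans (Real.sqrt_nonneg _) hfd
  calc |pd k f x| = Real.sqrt ((pd k f x)^2) := (Real.sqrt_sq_eq_abs _).symm
    _ ≤ Real.sqrt (2 * gradSq g f x) := Real.sqrt_le_sqrt (le_trans hvk hiq)
    _ = Real.sqrt 2 * Real.sqrt (gradSq g f x) := Real.sqrt_mul (by norm_num) _
    _ ≤ 2 * η₂ :=
        mul_le_mul sqrt_two_le_two hfd (Real.sqrt_nonneg _) (by norm_num)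

set_option maxHeartbeats 1000000 in
lemma err_pointwise (g : En n → Matrix (Fin n) (Fin n) ℝ) (f : En n → ℝ)
    (hgsm : ∀ i j, ContDiff ℝ (⊤ : ℕ∞) fun x => g x i j) (hfsm : ContDiff ℝ (⊤ : ℕ∞) f)
    (β : ℝ) (hβ0 : 0 ≤ β) (hβ1 : β ≤ 1) (x : En n) (hgpos : (g x).PosDef)
    {δ₁ δ₂ η₁ η₂ : ℝ}
    (hge : ∀ i j, |g x i j - if i = j then (1:ℝ) else 0| ≤ δ₁)
    (hgd : ∀ i j k, |pd k (fun y => g y i j) x| ≤ η₁)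
    (hfe : |f x| ≤ δ₂) (hfd : Real.sqrt (gradSq g f x) ≤ η₂)
    (hδ₁ : 0 ≤ δ₁) (hδ₁n : (n:ℝ) * δ₁ ≤ 1) (hδ₁1 : δ₁ ≤ 1) (hδ₂1 : 2 * δ₂ ≤ 1)
    (k a b : Fin n) :
    |pd k (fun y => Real.exp (2*β*f y) * g y a b) x
      - (1-β) * pd k (fun y => g y a b) x
      - β * pd k (fun y => Real.exp (2*f y) * g y a b) x|
      ≤ 8 * δ₂ * η₁ + 64 * δ₂ * η₂ := by
  have hδ₂0 : 0 ≤ δ₂ := le_trans (abs_nonneg _) hfe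
  have hη₁0 : 0 ≤ η₁ := le_trans (abs_nonneg _) (hgd a b k)
  have hη₂0 : 0 ≤ η₂ := le_trans (Real.sqrt_nonneg _) hfd
  have hpd1 := pd_exp_mul (2*β) f (fun y => g y a b) hfsm (hgsm a b) k x
  have hpd2 := pd_exp_mul 2 f (fun y => g y a b) hfsm (hgsm a b) k x
  have hassoc : ∀ y, 2 * β * f y = (2*β) * f y := fun y => by ring
  rw [hpd1, hpd2]
  set u := (2*β) * f x with hu
  set w := (2:ℝ) * f x with hwdef
  set fk := pd k f x with hfk
  set gab := g x a b with hgab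
  set dg := pd k (fun y => g y a b) x with hdg
  have hweq : u = β * w := by rw [hu, hwdef]; ring
  have hwle : |w| ≤ 1 := by rw [hwdef, abs_mul]; simp only [abs_two]; nlinarith
  have hule : |u| ≤ |w| := by
    rw [hweq, abs_mul, abs_of_nonneg hβ0]; nlinarith [abs_nonneg w]
  have hEu : |Real.exp u - 1| ≤ 2 * |u| := Real.abs_exp_sub_one_le (le_trans hule hwle)
  have hEw : |Real.exp w - 1| ≤ 2 * |w| := Real.abs_exp_sub_one_le hwle
  have hfkb : |fk| ≤ 2 * η₂ := pd_f_bound g f x hgpos hδ₁ hδ₁n hge hfd k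
  have hgabb : |gab| ≤ 2 := by
    have h1 := hge a b
    have : |gab| ≤ |gab - if a = b then (1:ℝ) else 0| + |if a = b then (1:ℝ) else 0| := by
      calc |gab| = |(gab - if a = b then (1:ℝ) else 0) + if a = b then (1:ℝ) else 0| := by ring_nf
        _ ≤ _ := abs_add_le _ _
    have h2 : |if a = b then (1:ℝ) else 0| ≤ 1 := by split <;> simp
    linarith
  have hdgb : |dg| ≤ η₁ := hgd a b k
  have hkey : Real.exp u * ((2*β) * fk * gab + dg) - (1-β) * dg - β * (Real.exp w * (2 * fk * gab + dg))
      = (Real.exp u - 1 - β * (Real.exp w - 1)) * dg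
        + (2*β*(Real.exp u - Real.exp w)) * (fk * gab) := by ring
  rw [hkey]
  have hc1 : |Real.exp u - 1 - β * (Real.exp w - 1)| ≤ 8 * δ₂ := by
    have : |Real.exp u - 1 - β * (Real.exp w - 1)| ≤ |Real.exp u - 1| + β * |Real.exp w - 1| := by
      calc |Real.exp u - 1 - β * (Real.exp w - 1)| ≤ |Real.exp u - 1| + |β * (Real.exp w - 1)| :=
            abs_sub _ _
        _ = |Real.exp u - 1| + β * |Real.exp w - 1| := by rw [abs_mul, abs_of_nonneg hβ0]
    have hw2 : |w| ≤ 2 * δ₂ := by rw [hwdef, abs_mul]; simp only [abs_two]; nlinarith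
    nlinarith [hEu, hEw, hule, abs_nonneg (Real.exp w - 1)]
  have hc2 : |2*β*(Real.exp u - Real.exp w)| ≤ 16 * δ₂ := by
    have h1 : |Real.exp u - Real.exp w| ≤ |Real.exp u - 1| + |Real.exp w - 1| := by
      calc |Real.exp u - Real.exp w| = |(Real.exp u - 1) - (Real.exp w - 1)| := by ring_nf
        _ ≤ _ := abs_sub _ _
    have hw2 : |w| ≤ 2 * δ₂ := by rw [hwdef, abs_mul]; simp only [abs_two]; nlinarith
    rw [abs_mul, abs_mul, abs_two, abs_of_nonneg hβ0]
    nlinarith [hEu, hEw, hule]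
  calc |(Real.exp u - 1 - β * (Real.exp w - 1)) * dg + (2*β*(Real.exp u - Real.exp w)) * (fk * gab)|
      ≤ |(Real.exp u - 1 - β * (Real.exp w - 1))| * |dg|
        + |2*β*(Real.exp u - Real.exp w)| * (|fk| * |gab|) := by
        calc _ ≤ |(Real.exp u - 1 - β * (Real.exp w - 1)) * dg|
              + |(2*β*(Real.exp u - Real.exp w)) * (fk * gab)| := abs_add_le _ _
          _ = _ := by simp only [abs_mul]
    _ ≤ 8 * δ₂ * η₁ + 16 * δ₂ * ((2*η₂) * 2) := by
        have t1 : |(Real.exp u - 1 - β * (Real.exp w - 1))| * |dg| ≤ 8 * δ₂ * η₁ :=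
          mul_le_mul hc1 hdgb (abs_nonneg _) (by linarith)
        have t2 : |fk| * |gab| ≤ (2*η₂) * 2 :=
          mul_le_mul hfkb hgabb (abs_nonneg _) (by linarith)
        have t3 : |2*β*(Real.exp u - Real.exp w)| * (|fk| * |gab|) ≤ 16 * δ₂ * ((2*η₂)*2) :=
          mul_le_mul hc2 t2 (by positivity) (by linarith)
        linarith
    _ = 8 * δ₂ * η₁ + 64 * δ₂ * η₂ := by ring


set_option maxHeartbeats 1000000 in
lemma err_integral_bound (g : En n → Matrix (Fin n) (Fin n) ℝ) (f : En n → ℝ)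
    (hgsm : ∀ i j, ContDiff ℝ (⊤ : ℕ∞) fun x => g x i j) (hfsm : ContDiff ℝ (⊤ : ℕ∞) f)
    (hgpos : ∀ x, (g x).PosDef)
    (β : ℝ) (hβ0 : 0 ≤ β) (hβ1 : β ≤ 1)
    (C₁ C₂ τ : ℝ) (hC₁ : 0 < C₁) (hC₂ : 0 < C₂)
    (r : ℝ) (hr1 : 1 ≤ r) (hn : 1 ≤ n)
    (hμtop : μH[(n:ℝ)-1] (Metric.sphere (0:En n) 1) ≠ ⊤)
    (hdec1 : ∀ x : En n, ‖x‖ = r → ∀ i j, |g x i j - if i = j then (1:ℝ) else 0| ≤ C₁ * r^(-τ))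
    (hdec2 : ∀ x : En n, ‖x‖ = r → ∀ i j k, |pd k (fun y => g y i j) x| ≤ C₁ * r^(-τ) / r)
    (hdec3 : ∀ x : En n, ‖x‖ = r → |f x| ≤ C₂ * r^(-τ))
    (hdec4 : ∀ x : En n, ‖x‖ = r → Real.sqrt (gradSq g f x) ≤ C₂ * r^(-τ) / r)
    (h1 : 2*(C₂*r^(-τ)) ≤ 1) (h2 : (n:ℝ)*(C₁*r^(-τ)) ≤ 1) (h3 : C₁*r^(-τ) ≤ 1) :
    |(∫ x in Metric.sphere (0:En n) r,
        (∑ i, ∑ j, (pd i (fun y => Real.exp (2*β*f y) * g y i j) x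
          - pd j (fun y => Real.exp (2*β*f y) * g y i i) x) * (x j / r)) ∂(μH[(n:ℝ)-1]))
      - ((1-β) * ∫ x in Metric.sphere (0:En n) r,
        (∑ i, ∑ j, (pd i (fun y => g y i j) x
          - pd j (fun y => g y i i) x) * (x j / r)) ∂(μH[(n:ℝ)-1])
        + β * ∫ x in Metric.sphere (0:En n) r,
        (∑ i, ∑ j, (pd i (fun y => Real.exp (2*f y) * g y i j) x
          - pd j (fun y => Real.exp (2*f y) * g y i i) x) * (x j / r)) ∂(μH[(n:ℝ)-1]))|
    ≤ (2*(n:ℝ)^2*(8*C₁*C₂+64*C₂^2)) * (r^(-τ)*(r^(-τ)/r))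
        * (r^((n:ℝ)-1) * (μH[(n:ℝ)-1] (Metric.sphere (0:En n) 1)).toReal) := by
  have hr0 : (0:ℝ) < r := lt_of_lt_of_le one_pos hr1
  have hrpos : (0:ℝ) < r ^ (-τ) := Real.rpow_pos_of_pos hr0 _
  have hfin : μH[(n:ℝ)-1] (Metric.sphere (0:En n) r) ≠ ⊤ :=
    sphere_measure_ne_top hn hr0 hμtop
  have hgbsm : ∀ i j : Fin n, ContDiff ℝ (⊤ : ℕ∞) (fun y : En n => Real.exp (2*β*f y) * g y i j) :=
    fun i j => ((contDiff_const.mul hfsm).exp.mul (hgsm i j))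
  have hgtsm : ∀ i j : Fin n, ContDiff ℝ (⊤ : ℕ∞) (fun y : En n => Real.exp (2*f y) * g y i j) :=
    fun i j => ((contDiff_const.mul hfsm).exp.mul (hgsm i j))
  have hi1 : IntegrableOn (fun x => ∑ i, ∑ j, (pd i (fun y => Real.exp (2*β*f y) * g y i j) x
      - pd j (fun y => Real.exp (2*β*f y) * g y i i) x) * (x j / r))
      (Metric.sphere (0:En n) r) (μH[(n:ℝ)-1]) :=
    integrableOn_sphere _ (F_continuous (fun i j y => Real.exp (2*β*f y) * g y i j)
      (fun i j => hgbsm i j) r) r hfin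
  have hi2 : IntegrableOn (fun x => ∑ i, ∑ j, (pd i (fun y => g y i j) x
      - pd j (fun y => g y i i) x) * (x j / r))
      (Metric.sphere (0:En n) r) (μH[(n:ℝ)-1]) :=
    integrableOn_sphere _ (F_continuous (fun i j y => g y i j)
      (fun i j => hgsm i j) r) r hfin
  have hi3 : IntegrableOn (fun x => ∑ i, ∑ j, (pd i (fun y => Real.exp (2*f y) * g y i j) x
      - pd j (fun y => Real.exp (2*f y) * g y i i) x) * (x j / r))
      (Metric.sphere (0:En n) r) (μH[(n:ℝ)-1]) :=
    integrableOn_sphere _ (F_continuous (fun i j y => Real.exp (2*f y) * g y i j)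
      (fun i j => hgtsm i j) r) r hfin
  set Merr := (8*C₁*C₂+64*C₂^2) * (r^(-τ)*(r^(-τ)/r)) with hMerr
  have hMerr0 : 0 ≤ Merr := by positivity
  -- pointwise bound
  have hpt : ∀ x ∈ Metric.sphere (0:En n) r,
      |(∑ i, ∑ j, (pd i (fun y => Real.exp (2*β*f y) * g y i j) x
          - pd j (fun y => Real.exp (2*β*f y) * g y i i) x) * (x j / r))
        - ((1-β) * (∑ i, ∑ j, (pd i (fun y => g y i j) x
          - pd j (fun y => g y i i) x) * (x j / r))
          + β * (∑ i, ∑ j, (pd i (fun y => Real.exp (2*f y) * g y i j) x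
          - pd j (fun y => Real.exp (2*f y) * g y i i) x) * (x j / r)))|
        ≤ 2*(n:ℝ)^2*Merr := by
    intro x hx
    have hxn : ‖x‖ = r := by simpa [mem_sphere_zero_iff_norm] using hx
    -- per-entry error bounds
    have hE : ∀ k a b : Fin n,
        |pd k (fun y => Real.exp (2*β*f y) * g y a b) x
          - (1-β) * pd k (fun y => g y a b) x
          - β * pd k (fun y => Real.exp (2*f y) * g y a b) x| ≤ Merr := by
      intro k a b
      have := err_pointwise g f hgsm hfsm β hβ0 hβ1 x (hgpos x)
        (δ₁ := C₁ * r^(-τ)) (δ₂ := C₂ * r^(-τ)) (η₁ := C₁ * r^(-τ)/r) (η₂ := C₂ * r^(-τ)/r)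
        (hdec1 x hxn) (fun i j k => hdec2 x hxn i j k) (hdec3 x hxn) (hdec4 x hxn)
        (by positivity) (by linarith [h2]) h3 (by linarith [h1]) k a b
      calc |pd k (fun y => Real.exp (2*β*f y) * g y a b) x
          - (1-β) * pd k (fun y => g y a b) x
          - β * pd k (fun y => Real.exp (2*f y) * g y a b) x|
          ≤ 8 * (C₂ * r^(-τ)) * (C₁ * r^(-τ)/r) + 64 * (C₂ * r^(-τ)) * (C₂ * r^(-τ)/r) := this
        _ = Merr := by rw [hMerr]; ring
    have hxj : ∀ j : Fin n, |x j / r| ≤ 1 := by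
      intro j
      rw [abs_div, abs_of_pos hr0, div_le_one hr0]
      exact le_trans (abs_coord_le_norm x j) (le_of_eq hxn)
    -- combine the three sums into one
    have hcomb : (∑ i, ∑ j, (pd i (fun y => Real.exp (2*β*f y) * g y i j) x
          - pd j (fun y => Real.exp (2*β*f y) * g y i i) x) * (x j / r))
        - ((1-β) * (∑ i, ∑ j, (pd i (fun y => g y i j) x
          - pd j (fun y => g y i i) x) * (x j / r))
          + β * (∑ i, ∑ j, (pd i (fun y => Real.exp (2*f y) * g y i j) x
          - pd j (fun y => Real.exp (2*f y) * g y i i) x) * (x j / r)))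
        = ∑ i, ∑ j,
          ((pd i (fun y => Real.exp (2*β*f y) * g y i j) x
            - (1-β) * pd i (fun y => g y i j) x
            - β * pd i (fun y => Real.exp (2*f y) * g y i j) x)
          - (pd j (fun y => Real.exp (2*β*f y) * g y i i) x
            - (1-β) * pd j (fun y => g y i i) x
            - β * pd j (fun y => Real.exp (2*f y) * g y i i) x)) * (x j / r) := by
      simp only [Finset.mul_sum, ← Finset.sum_add_distrib, ← Finset.sum_sub_distrib]
      exact Finset.sum_congr rfl fun i _ => Finset.sum_congr rfl fun j _ => by ring
    rw [hcomb]
    calc |∑ i, ∑ j, ((pd i (fun y => Real.exp (2*β*f y) * g y i j) x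
            - (1-β) * pd i (fun y => g y i j) x
            - β * pd i (fun y => Real.exp (2*f y) * g y i j) x)
          - (pd j (fun y => Real.exp (2*β*f y) * g y i i) x
            - (1-β) * pd j (fun y => g y i i) x
            - β * pd j (fun y => Real.exp (2*f y) * g y i i) x)) * (x j / r)|
        ≤ ∑ i, ∑ j : Fin n, (2*Merr) := by
          refine le_trans (Finset.abs_sum_le_sum_abs _ _) (Finset.sum_le_sum fun i _ => ?_)
          refine le_trans (Finset.abs_sum_le_sum_abs _ _) (Finset.sum_le_sum fun j _ => ?_)
          rw [abs_mul]
          calc _ ≤ (|pd i (fun y => Real.exp (2*β*f y) * g y i j) x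
                - (1-β) * pd i (fun y => g y i j) x
                - β * pd i (fun y => Real.exp (2*f y) * g y i j) x|
              + |pd j (fun y => Real.exp (2*β*f y) * g y i i) x
                - (1-β) * pd j (fun y => g y i i) x
                - β * pd j (fun y => Real.exp (2*f y) * g y i i) x|) * |x j / r| := by
                exact mul_le_mul_of_nonneg_right (abs_sub _ _) (abs_nonneg _)
            _ ≤ (Merr + Merr) * 1 := by
                refine mul_le_mul (add_le_add (hE i i j) (hE j i i)) (hxj j) (abs_nonneg _) ?_
                linarith [hMerr0]
            _ = 2*Merr := by ring
      _ = 2*(n:ℝ)^2*Merr := by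
          simp [Finset.sum_const, Finset.card_univ]
          ring
  -- split the integral
  have hsub : (∫ x in Metric.sphere (0:En n) r,
        (∑ i, ∑ j, (pd i (fun y => Real.exp (2*β*f y) * g y i j) x
          - pd j (fun y => Real.exp (2*β*f y) * g y i i) x) * (x j / r)) ∂(μH[(n:ℝ)-1]))
      - ((1-β) * ∫ x in Metric.sphere (0:En n) r,
        (∑ i, ∑ j, (pd i (fun y => g y i j) x
          - pd j (fun y => g y i i) x) * (x j / r)) ∂(μH[(n:ℝ)-1])
        + β * ∫ x in Metric.sphere (0:En n) r,
        (∑ i, ∑ j, (pd i (fun y => Real.exp (2*f y) * g y i j) x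
          - pd j (fun y => Real.exp (2*f y) * g y i i) x) * (x j / r)) ∂(μH[(n:ℝ)-1]))
      = ∫ x in Metric.sphere (0:En n) r,
        ((∑ i, ∑ j, (pd i (fun y => Real.exp (2*β*f y) * g y i j) x
          - pd j (fun y => Real.exp (2*β*f y) * g y i i) x) * (x j / r))
        - ((1-β) * (∑ i, ∑ j, (pd i (fun y => g y i j) x
          - pd j (fun y => g y i i) x) * (x j / r))
          + β * (∑ i, ∑ j, (pd i (fun y => Real.exp (2*f y) * g y i j) x
          - pd j (fun y => Real.exp (2*f y) * g y i i) x) * (x j / r)))) ∂(μH[(n:ℝ)-1]) := by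
    have hGH : IntegrableOn (fun x => (1-β) * (∑ i, ∑ j, (pd i (fun y => g y i j) x
          - pd j (fun y => g y i i) x) * (x j / r))
          + β * (∑ i, ∑ j, (pd i (fun y => Real.exp (2*f y) * g y i j) x
          - pd j (fun y => Real.exp (2*f y) * g y i i) x) * (x j / r)))
        (Metric.sphere (0:En n) r) (μH[(n:ℝ)-1]) :=
      (hi2.const_mul (1-β)).add (hi3.const_mul β)
    rw [integral_sub hi1 hGH, integral_add (hi2.const_mul (1-β)) (hi3.const_mul β),
      integral_const_mul, integral_const_mul]
  rw [hsub]
  calc |∫ x in Metric.sphere (0:En n) r,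
        ((∑ i, ∑ j, (pd i (fun y => Real.exp (2*β*f y) * g y i j) x
          - pd j (fun y => Real.exp (2*β*f y) * g y i i) x) * (x j / r))
        - ((1-β) * (∑ i, ∑ j, (pd i (fun y => g y i j) x
          - pd j (fun y => g y i i) x) * (x j / r))
          + β * (∑ i, ∑ j, (pd i (fun y => Real.exp (2*f y) * g y i j) x
          - pd j (fun y => Real.exp (2*f y) * g y i i) x) * (x j / r)))) ∂(μH[(n:ℝ)-1])|
      ≤ (2*(n:ℝ)^2*Merr) * (μH[(n:ℝ)-1] (Metric.sphere (0:En n) r)).toReal :=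
        abs_setIntegral_le _ Metric.isClosed_sphere.measurableSet hfin hpt
    _ = (2*(n:ℝ)^2*Merr) * (r^((n:ℝ)-1) * (μH[(n:ℝ)-1] (Metric.sphere (0:En n) 1)).toReal) := by
        rw [sphere_measure_scale hn hr0]
    _ = (2*(n:ℝ)^2*(8*C₁*C₂+64*C₂^2)) * (r^(-τ)*(r^(-τ)/r))
        * (r^((n:ℝ)-1) * (μH[(n:ℝ)-1] (Metric.sphere (0:En n) 1)).toReal) := by
        rw [hMerr]; ring

end Helpers

/-- under the decay hypotheses on `f`, with `ḡ = e^{2βf} g` and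
`g̃ = e^{2f} g`, the ADM energies satisfy `Ē = (1−β)E + βẼ`. -/
theorem ADMEnergy_convex (n : ℕ) (τ : ℝ) (g K : En n → Matrix (Fin n) (Fin n) ℝ)
    (f : En n → ℝ) (hAF : IsAFData n τ g K) (hf : AFDecay n τ g f)
    (β : ℝ) (hβ : 0 < β) (hβ1 : β < 1)
    (E Etil : ℝ)
    (hE : HasADMEnergy n g E)
    (hEtil : HasADMEnergy n (fun x => Real.exp (2 * f x) • g x) Etil) :
    HasADMEnergy n (fun x => Real.exp (2 * β * f x) • g x) ((1 - β) * E + β * Etil) := by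
    classical
  unfold HasADMEnergy at hE hEtil ⊢
  by_cases hc : (1 / (2 * ((n : ℝ) - 1) * sphereVol n)) = 0
  · rw [hc] at hE hEtil ⊢
    simp only [zero_mul] at hE hEtil ⊢
    have hE0 : E = 0 := tendsto_nhds_unique hE tendsto_const_nhds
    have hEtil0 : Etil = 0 := tendsto_nhds_unique hEtil tendsto_const_nhds
    rw [hE0, hEtil0]
    simpa using (tendsto_const_nhds : Tendsto (fun _ : ℝ => (0:ℝ)) atTop (𝓝 0))
  · simp only [Matrix.smul_apply, smul_eq_mul] at hEtil ⊢
    obtain ⟨hgsm, hKsm, hgpos, hKsym, hτ, C₁, R₁, ε, hC₁, hR₁, hε, hdec⟩ := hAF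
    obtain ⟨hfsm, C₂, R₂, hC₂, hR₂, hfdec⟩ := hf
    have hτhalf : 1/2 < τ := lt_of_le_of_lt (le_max_left _ _) hτ
    have hτn3 : (n:ℝ) - 3 < τ := lt_of_le_of_lt (le_max_right _ _) hτ
    have hτpos : 0 < τ := by linarith
    have hS0 : sphereVol n ≠ 0 := by
      intro h; exact hc (by rw [h]; simp)
    have hμtop : μH[(n:ℝ)-1] (Metric.sphere (0:En n) 1) ≠ ⊤ := by
      intro h
      exact hS0 (by simp [sphereVol, h])
    have hn : 1 ≤ n := by
      rcases Nat.eq_zero_or_pos n with h0 | h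
      · exfalso
        apply hS0
        subst h0
        have hempty : (Metric.sphere (0 : En 0) 1) = (∅ : Set (En 0)) := by
          ext x
          simp [Subsingleton.elim x (0 : En 0)]
        simp [sphereVol, hempty]
      · exact h
    have hSpos : 0 ≤ sphereVol n := ENNReal.toReal_nonneg
    have hSV : (μH[(n:ℝ)-1] (Metric.sphere (0:En n) 1)).toReal = sphereVol n := rfl
    have hexp_neg : (n:ℝ) - 2 - 2*τ < 0 := by
      rcases le_or_gt n 3 with h | h
      · have : (n:ℝ) ≤ 3 := by exact_mod_cast h
        linarith
      · have : (4:ℝ) ≤ (n:ℝ) := by exact_mod_cast h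
        linarith
    -- eventual smallness
    have hrp : Tendsto (fun r : ℝ => r ^ (-τ)) atTop (𝓝 0) := tendsto_rpow_neg_atTop hτpos
    have hsm1 : ∀ᶠ r : ℝ in atTop, 2*(C₂ * r^(-τ)) ≤ 1 := by
      have t : Tendsto (fun r : ℝ => 2*(C₂ * r^(-τ))) atTop (𝓝 (2*(C₂*0))) :=
        (hrp.const_mul C₂).const_mul 2
      rw [show 2*(C₂*(0:ℝ)) = 0 by ring] at t
      exact t.eventually (eventually_le_nhds one_pos)
    have hsm2 : ∀ᶠ r : ℝ in atTop, (n:ℝ)*(C₁ * r^(-τ)) ≤ 1 := by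
      have t : Tendsto (fun r : ℝ => (n:ℝ)*(C₁ * r^(-τ))) atTop (𝓝 ((n:ℝ)*(C₁*0))) :=
        (hrp.const_mul C₁).const_mul (n:ℝ)
      rw [show (n:ℝ)*(C₁*(0:ℝ)) = 0 by ring] at t
      exact t.eventually (eventually_le_nhds one_pos)
    have hsm3 : ∀ᶠ r : ℝ in atTop, C₁ * r^(-τ) ≤ 1 := by
      have t : Tendsto (fun r : ℝ => C₁ * r^(-τ)) atTop (𝓝 (C₁*0)) := hrp.const_mul C₁
      rw [show C₁*(0:ℝ) = 0 by ring] at t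
      exact t.eventually (eventually_le_nhds one_pos)
    -- the limit of the error bound
    have hGlim : Tendsto (fun r : ℝ =>
        (|1 / (2 * ((n : ℝ) - 1) * sphereVol n)| * ((2*(n:ℝ)^2*(8*C₁*C₂+64*C₂^2)) * sphereVol n))
          * r ^ ((n:ℝ) - 2 - 2*τ)) atTop (𝓝 0) := by
      have h := tendsto_rpow_neg_atTop (y := -((n:ℝ) - 2 - 2*τ)) (by linarith)
      rw [neg_neg] at h
      simpa using h.const_mul
        (|1 / (2 * ((n : ℝ) - 1) * sphereVol n)| * ((2*(n:ℝ)^2*(8*C₁*C₂+64*C₂^2)) * sphereVol n))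
    have key : Tendsto (fun r : ℝ =>
        (1 / (2 * ((n : ℝ) - 1) * sphereVol n) * ∫ x in Metric.sphere (0:En n) r,
          (∑ i, ∑ j, (pd i (fun y => Real.exp (2*β*f y) * g y i j) x
            - pd j (fun y => Real.exp (2*β*f y) * g y i i) x) * (x j / r)) ∂(μH[(n:ℝ)-1]))
        - ((1-β) * (1 / (2 * ((n : ℝ) - 1) * sphereVol n) * ∫ x in Metric.sphere (0:En n) r,
          (∑ i, ∑ j, (pd i (fun y => g y i j) x
            - pd j (fun y => g y i i) x) * (x j / r)) ∂(μH[(n:ℝ)-1]))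
          + β * (1 / (2 * ((n : ℝ) - 1) * sphereVol n) * ∫ x in Metric.sphere (0:En n) r,
          (∑ i, ∑ j, (pd i (fun y => Real.exp (2*f y) * g y i j) x
            - pd j (fun y => Real.exp (2*f y) * g y i i) x) * (x j / r)) ∂(μH[(n:ℝ)-1]))))
        atTop (𝓝 0) := by
      apply squeeze_zero_norm' ?_ hGlim
      filter_upwards [eventually_ge_atTop (max 1 (max R₁ R₂)), hsm1, hsm2, hsm3]
        with r hr hs1 hs2 hs3
      have hr1 : (1:ℝ) ≤ r := le_trans (le_max_left _ _) hr
      have hR1 : R₁ ≤ r := le_trans (le_trans (le_max_left _ _) (le_max_right _ _)) hr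
      have hR2 : R₂ ≤ r := le_trans (le_trans (le_max_right _ _) (le_max_right _ _)) hr
      have hr0 : (0:ℝ) < r := lt_of_lt_of_le one_pos hr1
      have hd1 : ∀ x : En n, ‖x‖ = r → ∀ i j, |g x i j - if i = j then (1:ℝ) else 0| ≤ C₁ * r^(-τ) := by
        intro x hx i j
        have h := ((hdec x (by rw [hx]; exact hR1)).1 i j i)
        rw [hx] at h
        nlinarith [mul_nonneg hr0.le (abs_nonneg (pd i (fun y => g y i j) x)),
          mul_nonneg hr0.le (abs_nonneg (K x i j))]
      have hd2 : ∀ x : En n, ‖x‖ = r → ∀ i j k, |pd k (fun y => g y i j) x| ≤ C₁ * r^(-τ) / r := by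
        intro x hx i j k
        have h := ((hdec x (by rw [hx]; exact hR1)).1 i j k)
        rw [hx] at h
        rw [le_div_iff₀ hr0, mul_comm]
        nlinarith [abs_nonneg (g x i j - if i = j then (1:ℝ) else 0),
          mul_nonneg hr0.le (abs_nonneg (K x i j))]
      have hd3 : ∀ x : En n, ‖x‖ = r → |f x| ≤ C₂ * r^(-τ) := by
        intro x hx
        have h := hfdec x (by rw [hx]; exact hR2)
        rw [hx] at h
        nlinarith [mul_nonneg hr0.le (Real.sqrt_nonneg (gradSq g f x)),
          mul_nonneg hr0.le (Real.sqrt_nonneg |laplacian g f x|)]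
      have hd4 : ∀ x : En n, ‖x‖ = r → Real.sqrt (gradSq g f x) ≤ C₂ * r^(-τ) / r := by
        intro x hx
        have h := hfdec x (by rw [hx]; exact hR2)
        rw [hx] at h
        rw [le_div_iff₀ hr0, mul_comm]
        nlinarith [abs_nonneg (f x),
          mul_nonneg hr0.le (Real.sqrt_nonneg |laplacian g f x|)]
      have hb := err_integral_bound g f hgsm hfsm hgpos β hβ.le hβ1.le C₁ C₂ τ hC₁ hC₂
        r hr1 hn hμtop hd1 hd2 hd3 hd4 hs1 hs2 hs3
      rw [Real.norm_eq_abs]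
      have hrw : r ^ (-τ) * (r ^ (-τ) / r) * r ^ ((n:ℝ)-1) = r ^ ((n:ℝ)-2-2*τ) := by
        rw [div_eq_mul_inv, ← Real.rpow_neg_one r, ← Real.rpow_add hr0,
          ← Real.rpow_add hr0, ← Real.rpow_add hr0]
        congr 1
        ring
      have heq : (1 / (2 * ((n : ℝ) - 1) * sphereVol n) * ∫ x in Metric.sphere (0:En n) r,
          (∑ i, ∑ j, (pd i (fun y => Real.exp (2*β*f y) * g y i j) x
            - pd j (fun y => Real.exp (2*β*f y) * g y i i) x) * (x j / r)) ∂(μH[(n:ℝ)-1]))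
        - ((1-β) * (1 / (2 * ((n : ℝ) - 1) * sphereVol n) * ∫ x in Metric.sphere (0:En n) r,
          (∑ i, ∑ j, (pd i (fun y => g y i j) x
            - pd j (fun y => g y i i) x) * (x j / r)) ∂(μH[(n:ℝ)-1]))
          + β * (1 / (2 * ((n : ℝ) - 1) * sphereVol n) * ∫ x in Metric.sphere (0:En n) r,
          (∑ i, ∑ j, (pd i (fun y => Real.exp (2*f y) * g y i j) x
            - pd j (fun y => Real.exp (2*f y) * g y i i) x) * (x j / r)) ∂(μH[(n:ℝ)-1])))
        = (1 / (2 * ((n : ℝ) - 1) * sphereVol n)) *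
          ((∫ x in Metric.sphere (0:En n) r,
          (∑ i, ∑ j, (pd i (fun y => Real.exp (2*β*f y) * g y i j) x
            - pd j (fun y => Real.exp (2*β*f y) * g y i i) x) * (x j / r)) ∂(μH[(n:ℝ)-1]))
          - ((1-β) * ∫ x in Metric.sphere (0:En n) r,
          (∑ i, ∑ j, (pd i (fun y => g y i j) x
            - pd j (fun y => g y i i) x) * (x j / r)) ∂(μH[(n:ℝ)-1])
            + β * ∫ x in Metric.sphere (0:En n) r,
          (∑ i, ∑ j, (pd i (fun y => Real.exp (2*f y) * g y i j) x
            - pd j (fun y => Real.exp (2*f y) * g y i i) x) * (x j / r)) ∂(μH[(n:ℝ)-1]))) := by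
        ring
      rw [heq, abs_mul]
      calc |1 / (2 * ((n : ℝ) - 1) * sphereVol n)| * |_| 
          ≤ |1 / (2 * ((n : ℝ) - 1) * sphereVol n)| *
            ((2*(n:ℝ)^2*(8*C₁*C₂+64*C₂^2)) * (r^(-τ)*(r^(-τ)/r))
              * (r^((n:ℝ)-1) * (μH[(n:ℝ)-1] (Metric.sphere (0:En n) 1)).toReal)) :=
            mul_le_mul_of_nonneg_left hb (abs_nonneg _)
        _ = (|1 / (2 * ((n : ℝ) - 1) * sphereVol n)|
              * ((2*(n:ℝ)^2*(8*C₁*C₂+64*C₂^2)) * sphereVol n)) * r ^ ((n:ℝ) - 2 - 2*τ) := by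
            rw [hSV, ← hrw]
            ring
    -- combine
    have hfinal := ((hE.const_mul (1-β)).add (hEtil.const_mul β)).add key
    rw [add_zero] at hfinal
    refine Tendsto.congr (fun r => by ring) hfinal
end
end
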